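/- arXiv:2105.08152 — 7 statements merged into one kernel-verified Lean document; each statement's English description precedes it below -/
import Mathlib

section
/- The free exact completion E_ex of a category E with finite limits has finite limits: it has a terminal object, and every cospan has a pullback. -/
/-!
Morphisms of `E_ex` are only defined up to a witness in the relation object, so the pullback of
`f : X ⟶ Z` and `g : Y ⟶ Z` is the homotopy pullback: its underlying object consists of triples
`(x, ζ, y)` with `ζ` a `Z`-witness relating `f₀ x` and `g₀ y`, and its relation is the inverse
image of the product relation on `X × Y`. The component `ζ` witnesses that the square commutes,
a cone `(u, w)` with witness `k` lifts to `(u₀, k, w₀)`, and the lift is unique because a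
relation that is an inverse image detects equality of morphisms after projecting. The terminal
object is the discrete relation on `⊤_ E`.
-/

open CategoryTheory Limits

universe w v u

namespace ExCompletion

variable (E : Type u) [Category.{v} E] [HasFiniteLimits E]

/-- A pseudo-equivalence relation in a finitely complete category `E`. -/
structure PseudoEqRel where
  X0 : E
  X1 : E
  s : X1 ⟶ X0
  t : X1 ⟶ X0
  r : X0 ⟶ X1
  rs : r ≫ s = 𝟙 X0
  rt : r ≫ t = 𝟙 X0
  v : X1 ⟶ X1
  vs : v ≫ s = t
  vt : v ≫ t = s
  m : pullback t s ⟶ X1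
  ms : m ≫ s = pullback.fst t s ≫ s
  mt : m ≫ t = pullback.snd t s ≫ t

variable {E}

/-- A representative of a morphism of pseudo-equivalence relations. -/
@[ext]
structure Rep (X Y : PseudoEqRel E) where
  f0 : X.X0 ⟶ Y.X0
  f1 : X.X1 ⟶ Y.X1
  hs : f1 ≫ Y.s = X.s ≫ f0
  ht : f1 ≫ Y.t = X.t ≫ f0

/-- Two representatives are related iff there is a witness of equality. -/
def RepRel {X Y : PseudoEqRel E} (f g : Rep X Y) : Prop :=
  ∃ h : X.X0 ⟶ Y.X1, h ≫ Y.s = f.f0 ∧ h ≫ Y.t = g.f0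

theorem repRel_equivalence (X Y : PseudoEqRel E) : Equivalence (RepRel (X := X) (Y := Y)) := by
  constructor
  · intro f
    exact ⟨f.f0 ≫ Y.r, by rw [Category.assoc, Y.rs, Category.comp_id],
      by rw [Category.assoc, Y.rt, Category.comp_id]⟩
  · rintro f g ⟨h, h1, h2⟩
    exact ⟨h ≫ Y.v, by rw [Category.assoc, Y.vs, h2], by rw [Category.assoc, Y.vt, h1]⟩
  · rintro f g k ⟨h1, h1s, h1t⟩ ⟨h2, h2s, h2t⟩
    refine ⟨pullback.lift h1 h2 (by rw [h1t, h2s]) ≫ Y.m, ?_, ?_⟩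
    · rw [Category.assoc, Y.ms, ← Category.assoc, pullback.lift_fst, h1s]
    · rw [Category.assoc, Y.mt, ← Category.assoc, pullback.lift_snd, h2t]

instance repSetoid (X Y : PseudoEqRel E) : Setoid (Rep X Y) :=
  ⟨RepRel, repRel_equivalence X Y⟩

/-- The identity representative. -/
def Rep.id (X : PseudoEqRel E) : Rep X X :=
  ⟨𝟙 _, 𝟙 _, by simp, by simp⟩

/-- Composition of representatives. -/
def Rep.comp {X Y Z : PseudoEqRel E} (f : Rep X Y) (g : Rep Y Z) : Rep X Z :=
  ⟨f.f0 ≫ g.f0, f.f1 ≫ g.f1, by rw [Category.assoc, g.hs, ← Category.assoc, f.hs, Category.assoc],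
    by rw [Category.assoc, g.ht, ← Category.assoc, f.ht, Category.assoc]⟩

theorem repRel_comp {X Y Z : PseudoEqRel E} {f f' : Rep X Y} {g g' : Rep Y Z}
    (hf : RepRel f f') (hg : RepRel g g') : RepRel (f.comp g) (f'.comp g') := by
  obtain ⟨h1, h1s, h1t⟩ := hf
  obtain ⟨h2, h2s, h2t⟩ := hg
  refine (repRel_equivalence X Z).trans (y := f'.comp g) ?_ ?_
  · exact ⟨h1 ≫ g.f1, by rw [Category.assoc, g.hs, ← Category.assoc, h1s]; rfl,
      by rw [Category.assoc, g.ht, ← Category.assoc, h1t]; rfl⟩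
  · exact ⟨f'.f0 ≫ h2, by rw [Category.assoc, h2s]; rfl, by rw [Category.assoc, h2t]; rfl⟩

instance : Category.{v} (PseudoEqRel E) where
  Hom X Y := Quotient (repSetoid X Y)
  id X := ⟦Rep.id X⟧
  comp {X Y Z} := Quotient.map₂ Rep.comp (fun _ _ hf _ _ hg => repRel_comp hf hg)
  id_comp {X Y} f := by
    refine Quotient.inductionOn f (fun f => Quotient.sound ?_)
    exact ⟨f.f0 ≫ Y.r, by simp [Rep.comp, Rep.id, Y.rs], by simp [Y.rt]⟩
  comp_id {X Y} f := by
    refine Quotient.inductionOn f (fun f => Quotient.sound ?_)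
    exact ⟨f.f0 ≫ Y.r, by simp [Rep.comp, Rep.id, Y.rs], by simp [Y.rt]⟩
  assoc {W X Y Z} f g h := by
    refine Quotient.inductionOn₃ f g h (fun f g h => Quotient.sound ?_)
    exact ⟨(f.f0 ≫ g.f0 ≫ h.f0) ≫ Z.r, by simp [Rep.comp, Z.rs], by simp [Rep.comp, Z.rt]⟩

/-- The inclusion of `E` into its free exact completion, sending an object to the
discrete pseudo-equivalence relation on it. -/
noncomputable def discreteInclusion : E ⥤ PseudoEqRel E where
  obj X :=
    { X0 := X, X1 := X, s := 𝟙 X, t := 𝟙 X, r := 𝟙 X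
      rs := by simp, rt := by simp
      v := 𝟙 X, vs := by simp, vt := by simp
      m := pullback.fst (𝟙 X) (𝟙 X)
      ms := rfl
      mt := by simpa using pullback.condition (f := 𝟙 X) (g := 𝟙 X) }
  map f := ⟦⟨f, f, by simp, by simp⟩⟧
  map_id X := Quotient.sound ⟨𝟙 X, by simp [Rep.id], by simp [Rep.id]⟩
  map_comp f g := Quotient.sound ⟨f ≫ g, by simp, by simp [Rep.comp]⟩

def Rep.hom {X Y : PseudoEqRel E} (f : Rep X Y) : X ⟶ Y :=
  ⟦f⟧

theorem Rep.hom_comp_hom {X Y Z : PseudoEqRel E} (f : Rep X Y) (g : Rep Y Z) :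
    f.hom ≫ g.hom = (f.comp g).hom :=
  rfl

theorem Rep.hom_eq_hom_iff {X Y : PseudoEqRel E} {f g : Rep X Y} : f.hom = g.hom ↔ RepRel f g :=
  Quotient.eq

theorem Rep.hom_surjective {X Y : PseudoEqRel E} :
    Function.Surjective (Rep.hom (X := X) (Y := Y)) :=
  Quotient.mk_surjective

noncomputable instance (A : PseudoEqRel E) : Unique (A ⟶ discreteInclusion.obj (⊤_ E)) where
  default :=
    Rep.hom ⟨terminal.from _, terminal.from _, terminal.hom_ext _ _, terminal.hom_ext _ _⟩
  uniq a := Quotient.inductionOn a fun _ =>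
    Quotient.sound ⟨terminal.from _, terminal.hom_ext _ _, terminal.hom_ext _ _⟩

-- Mathlib leaves these to `limit.lift_π`, which does not fire on `prod.lift` and `pullback.lift`.
attribute [local simp] prod.lift_fst prod.lift_snd prod.lift_fst_assoc prod.lift_snd_assoc
  pullback.lift_fst pullback.lift_snd pullback.lift_fst_assoc pullback.lift_snd_assoc

namespace PseudoEqRel

section Paths

variable (R : PseudoEqRel E) {A B : E} (p : A ⟶ R.X0) (q : B ⟶ R.X0)

noncomputable abbrev paths : E :=
  pullback (prod.lift R.s R.t) (prod.map p q)

noncomputable def pathsFst : R.paths p q ⟶ A :=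
  pullback.snd _ _ ≫ prod.fst

noncomputable def pathsSnd : R.paths p q ⟶ B :=
  pullback.snd _ _ ≫ prod.snd

noncomputable def pathsWitness : R.paths p q ⟶ R.X1 :=
  pullback.fst _ _

theorem pathsWitness_s : R.pathsWitness p q ≫ R.s = R.pathsFst p q ≫ p := by
  simpa [pathsWitness, pathsFst] using
    pullback.condition (f := prod.lift R.s R.t) (g := prod.map p q) =≫ prod.fst

theorem pathsWitness_t : R.pathsWitness p q ≫ R.t = R.pathsSnd p q ≫ q := by
  simpa [pathsWitness, pathsSnd] using
    pullback.condition (f := prod.lift R.s R.t) (g := prod.map p q) =≫ prod.snd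

variable {R p q} {W : E} (a : W ⟶ A) (b : W ⟶ B) (ρ : W ⟶ R.X1)
  (hs : ρ ≫ R.s = a ≫ p) (ht : ρ ≫ R.t = b ≫ q)

noncomputable def pathsLift : W ⟶ R.paths p q :=
  pullback.lift ρ (prod.lift a b) (by ext <;> simp [hs, ht])

@[simp]
theorem pathsLift_fst : pathsLift a b ρ hs ht ≫ R.pathsFst p q = a := by
  simp [pathsLift, pathsFst]

@[simp]
theorem pathsLift_snd : pathsLift a b ρ hs ht ≫ R.pathsSnd p q = b := by
  simp [pathsLift, pathsSnd]

@[simp]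
theorem pathsLift_witness : pathsLift a b ρ hs ht ≫ R.pathsWitness p q = ρ := by
  simp [pathsLift, pathsWitness]

end Paths

section Comap

variable (R : PseudoEqRel E) {B : E} (q : B ⟶ R.X0)

noncomputable abbrev comap : PseudoEqRel E where
  X0 := B
  X1 := R.paths q q
  s := R.pathsFst q q
  t := R.pathsSnd q q
  r := pathsLift (𝟙 B) (𝟙 B) (q ≫ R.r) (by simp [R.rs]) (by simp [R.rt])
  rs := pathsLift_fst ..
  rt := pathsLift_snd ..
  v := pathsLift (R.pathsSnd q q) (R.pathsFst q q) (R.pathsWitness q q ≫ R.v)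
    (by rw [Category.assoc, R.vs, pathsWitness_t]) (by rw [Category.assoc, R.vt, pathsWitness_s])
  vs := pathsLift_fst ..
  vt := pathsLift_snd ..
  m := pathsLift (pullback.fst _ _ ≫ R.pathsFst q q) (pullback.snd _ _ ≫ R.pathsSnd q q)
    (pullback.lift (pullback.fst _ _ ≫ R.pathsWitness q q)
      (pullback.snd _ _ ≫ R.pathsWitness q q)
      (by rw [Category.assoc, Category.assoc, pathsWitness_t, pathsWitness_s,
        pullback.condition_assoc]) ≫ R.m)
    (by simp [R.ms, pathsWitness_s]) (by simp [R.mt, pathsWitness_t])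
  ms := pathsLift_fst ..
  mt := pathsLift_snd ..

noncomputable def comapRep : Rep (R.comap q) R :=
  ⟨q, R.pathsWitness q q, R.pathsWitness_s q q, R.pathsWitness_t q q⟩

variable {R q}

instance : Mono (R.comapRep q).hom where
  right_cancellation k l h := by
    obtain ⟨k, rfl⟩ := Rep.hom_surjective k
    obtain ⟨l, rfl⟩ := Rep.hom_surjective l
    obtain ⟨w, hws, hwt⟩ := Rep.hom_eq_hom_iff.1 h
    exact Rep.hom_eq_hom_iff.2
      ⟨pathsLift k.f0 l.f0 w hws hwt, pathsLift_fst .., pathsLift_snd ..⟩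

noncomputable def comapLift {W : PseudoEqRel E} (k : Rep W R) (l : W.X0 ⟶ B)
    (h : l ≫ q = k.f0) : Rep W (R.comap q) :=
  ⟨l, pathsLift (W.s ≫ l) (W.t ≫ l) k.f1 (by rw [k.hs, Category.assoc, h])
    (by rw [k.ht, Category.assoc, h]), pathsLift_fst .., pathsLift_snd ..⟩

theorem comapLift_comp_comapRep {W : PseudoEqRel E} (k : Rep W R) (l : W.X0 ⟶ B)
    (h : l ≫ q = k.f0) : (comapLift k l h).comp (R.comapRep q) = k :=
  Rep.ext h (by simp [comapLift, comapRep, Rep.comp])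

end Comap

section Prod

variable (X Y : PseudoEqRel E)

protected noncomputable abbrev prod : PseudoEqRel E where
  X0 := X.X0 ⨯ Y.X0
  X1 := X.X1 ⨯ Y.X1
  s := prod.map X.s Y.s
  t := prod.map X.t Y.t
  r := prod.map X.r Y.r
  rs := by ext <;> simp [X.rs, Y.rs]
  rt := by ext <;> simp [X.rt, Y.rt]
  v := prod.map X.v Y.v
  vs := by ext <;> simp [X.vs, Y.vs]
  vt := by ext <;> simp [X.vt, Y.vt]
  m := prod.lift
    (pullback.lift (pullback.fst _ _ ≫ prod.fst) (pullback.snd _ _ ≫ prod.fst)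
      (by simpa using pullback.condition (f := prod.map X.t Y.t) (g := prod.map X.s Y.s) =≫
        prod.fst) ≫ X.m)
    (pullback.lift (pullback.fst _ _ ≫ prod.snd) (pullback.snd _ _ ≫ prod.snd)
      (by simpa using pullback.condition (f := prod.map X.t Y.t) (g := prod.map X.s Y.s) =≫
        prod.snd) ≫ Y.m)
  ms := by ext <;> simp [X.ms, Y.ms]
  mt := by ext <;> simp [X.mt, Y.mt]

noncomputable def prodFst : Rep (X.prod Y) X :=
  ⟨prod.fst, prod.fst, (prod.map_fst ..).symm, (prod.map_fst ..).symm⟩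

noncomputable def prodSnd : Rep (X.prod Y) Y :=
  ⟨prod.snd, prod.snd, (prod.map_snd ..).symm, (prod.map_snd ..).symm⟩

variable {X Y}

theorem prod_hom_ext {W : PseudoEqRel E} {k l : W ⟶ X.prod Y}
    (h₁ : k ≫ (prodFst X Y).hom = l ≫ (prodFst X Y).hom)
    (h₂ : k ≫ (prodSnd X Y).hom = l ≫ (prodSnd X Y).hom) : k = l := by
  obtain ⟨k, rfl⟩ := Rep.hom_surjective k
  obtain ⟨l, rfl⟩ := Rep.hom_surjective l
  obtain ⟨w₁, hw₁s, hw₁t⟩ := Rep.hom_eq_hom_iff.1 h₁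
  obtain ⟨w₂, hw₂s, hw₂t⟩ := Rep.hom_eq_hom_iff.1 h₂
  refine Rep.hom_eq_hom_iff.2 ⟨prod.lift w₁ w₂, ?_, ?_⟩ <;> ext <;>
    simp_all [Rep.comp, prodFst, prodSnd]

noncomputable def prodLift {W : PseudoEqRel E} (u : Rep W X) (w : Rep W Y) : Rep W (X.prod Y) :=
  ⟨prod.lift u.f0 w.f0, prod.lift u.f1 w.f1, by ext <;> simp [u.hs, w.hs],
    by ext <;> simp [u.ht, w.ht]⟩

theorem prodLift_comp_prodFst {W : PseudoEqRel E} (u : Rep W X) (w : Rep W Y) :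
    (prodLift u w).comp (prodFst X Y) = u :=
  Rep.ext (prod.lift_fst ..) (prod.lift_fst ..)

theorem prodLift_comp_prodSnd {W : PseudoEqRel E} (u : Rep W X) (w : Rep W Y) :
    (prodLift u w).comp (prodSnd X Y) = w :=
  Rep.ext (prod.lift_snd ..) (prod.lift_snd ..)

end Prod

end PseudoEqRel

open PseudoEqRel

section Pullback

variable {X Y Z : PseudoEqRel E} (f : Rep X Z) (g : Rep Y Z)

noncomputable abbrev pullbackObj : PseudoEqRel E :=
  (X.prod Y).comap (prod.lift (Z.pathsFst f.f0 g.f0) (Z.pathsSnd f.f0 g.f0))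

noncomputable def pullbackFst : pullbackObj f g ⟶ X :=
  (comapRep _ _).hom ≫ (prodFst X Y).hom

noncomputable def pullbackSnd : pullbackObj f g ⟶ Y :=
  (comapRep _ _).hom ≫ (prodSnd X Y).hom

theorem pullback_condition : pullbackFst f g ≫ f.hom = pullbackSnd f g ≫ g.hom := by
  refine Rep.hom_eq_hom_iff.2 ⟨Z.pathsWitness f.f0 g.f0, ?_, ?_⟩
  · simp [Rep.comp, comapRep, prodFst, pathsWitness_s]
  · simp [Rep.comp, comapRep, prodSnd, pathsWitness_t]

theorem pullback_hom_ext {W : PseudoEqRel E} {k l : W ⟶ pullbackObj f g}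
    (h₁ : k ≫ pullbackFst f g = l ≫ pullbackFst f g)
    (h₂ : k ≫ pullbackSnd f g = l ≫ pullbackSnd f g) : k = l := by
  refine (cancel_mono (comapRep _ _).hom).1 (prod_hom_ext ?_ ?_)
  · simpa [pullbackFst] using h₁
  · simpa [pullbackSnd] using h₂

theorem exists_lift_pullback {W : PseudoEqRel E} (a : W ⟶ X) (b : W ⟶ Y)
    (h : a ≫ f.hom = b ≫ g.hom) :
    ∃ l : W ⟶ pullbackObj f g, l ≫ pullbackFst f g = a ∧ l ≫ pullbackSnd f g = b := by
  obtain ⟨u, rfl⟩ := Rep.hom_surjective a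
  obtain ⟨w, rfl⟩ := Rep.hom_surjective b
  obtain ⟨k, hks : k ≫ Z.s = u.f0 ≫ f.f0, hkt : k ≫ Z.t = w.f0 ≫ g.f0⟩ :=
    Rep.hom_eq_hom_iff.1 h
  let l : Rep W (pullbackObj f g) :=
    comapLift (prodLift u w) (Z.pathsLift u.f0 w.f0 k hks hkt) (by ext <;> simp [prodLift])
  refine ⟨l.hom, ?_, ?_⟩
  · rw [pullbackFst, ← Category.assoc, Rep.hom_comp_hom, Rep.hom_comp_hom,
      comapLift_comp_comapRep, prodLift_comp_prodFst]
  · rw [pullbackSnd, ← Category.assoc, Rep.hom_comp_hom, Rep.hom_comp_hom,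
      comapLift_comp_comapRep, prodLift_comp_prodSnd]

noncomputable def pullbackConeIsLimit :
    IsLimit (PullbackCone.mk _ _ (pullback_condition f g)) := by
  choose lift lift_fst lift_snd using
    fun c : PullbackCone f.hom g.hom => exists_lift_pullback f g c.fst c.snd c.condition
  exact PullbackCone.IsLimit.mk _ lift lift_fst lift_snd fun c _ h₁ h₂ =>
    pullback_hom_ext f g (h₁.trans (lift_fst c).symm) (h₂.trans (lift_snd c).symm)

instance (f : X ⟶ Z) (g : Y ⟶ Z) : HasPullback f g := by
  obtain ⟨f, rfl⟩ := Rep.hom_surjective f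
  obtain ⟨g, rfl⟩ := Rep.hom_surjective g
  exact ⟨⟨⟨_, pullbackConeIsLimit f g⟩⟩⟩

end Pullback

instance : HasTerminal (PseudoEqRel E) :=
  hasTerminal_of_unique (discreteInclusion.obj (⊤_ E))

end ExCompletion

open ExCompletion in
/-- The free exact completion `E_ex` of a category `E` with finite
limits has finite limits: it has a terminal object, and every cospan has a pullback. -/
theorem freeExactCompletion_hasTerminal_hasPullbacks
    (E : Type u) [Category.{v} E] [HasFiniteLimits E] :
    HasTerminal (PseudoEqRel E) ∧
      ∀ (X Y Z : PseudoEqRel E) (f : X ⟶ Z) (g : Y ⟶ Z), HasPullback f g :=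
  ⟨inferInstance, fun _ _ _ _ _ => inferInstance⟩
end

section
/- Every object X of a category E, regarded as a discrete pseudo-equivalence relation (X1 = X0 = X with s = t = id), gives rise to a fully faithful functor E → E_ex. -/
open CategoryTheory Limits

universe w v u

namespace ExCompletion

variable (E : Type u) [Category.{v} E] [HasFiniteLimits E]

variable {E}

/-- The structure maps of a discrete pseudo-equivalence relation are identities, so a witness of
equality into it is simultaneously both of the maps it relates. -/
theorem repRel_discrete_iff {X : PseudoEqRel E} {Y : E} {f g : Rep X (discreteInclusion.obj Y)} :
    RepRel f g ↔ f.f0 = g.f0 :=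
  ⟨fun ⟨_, hs, ht⟩ => hs.symm.trans ht,
    fun h => ⟨f.f0, Category.comp_id _, (Category.comp_id _).trans h⟩⟩

theorem mk_eq_discreteInclusion_map {X Y : E}
    (f : Rep (discreteInclusion.obj X) (discreteInclusion.obj Y)) :
    (⟦f⟧ : discreteInclusion.obj X ⟶ discreteInclusion.obj Y) = discreteInclusion.map f.f0 :=
  Quotient.sound (repRel_discrete_iff.2 rfl)

theorem discreteInclusion_map_injective {X Y : E} :
    Function.Injective (discreteInclusion.map : (X ⟶ Y) → _) :=
  fun _ _ h => repRel_discrete_iff.1 (Quotient.exact h)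

end ExCompletion

open ExCompletion in
/-- Sending every object `X` of `E` to the discrete pseudo-equivalence
relation on it (`X1 = X0 = X` with `s = t = id`) gives rise to a fully faithful
functor `E ⥤ E_ex`. -/
theorem discreteInclusion_full_and_faithful
    (E : Type u) [Category.{v} E] [HasFiniteLimits E] :
    (discreteInclusion (E := E)).Full ∧ (discreteInclusion (E := E)).Faithful :=
  ⟨⟨fun φ => Quotient.inductionOn φ fun f => ⟨f.f0, (mk_eq_discreteInclusion_map f).symm⟩⟩,
    ⟨fun h => discreteInclusion_map_injective h⟩⟩
end

section
/- For the prederivator E_ex, the restriction functor along the inclusion of objects incl_A : ob(A) → A, namely incl_A^* : E_ex(A) → E_ex(ob(A)), is conservative: a morphism of coherent A-diagrams whose restriction to the discrete category of objects is an isomorphism is itself an isomorphism. (Axiom Der2.) -/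
open CategoryTheory Limits

universe w v u

namespace ExCompletion

noncomputable section

universe v' u'

variable {E : Type u} [Category.{v} E] [HasFiniteLimits E]
variable {A : Type u'} [Category.{v'} A]

/-- A coherent `A`-diagram in the free exact completion `E_ex`. -/
structure CohDiag (E : Type u) [Category.{v} E] [HasFiniteLimits E]
    (A : Type u') [Category.{v'} A] where
  obj : A → PseudoEqRel E
  map : ∀ {a a' : A}, (a ⟶ a') → Rep (obj a) (obj a')
  wid : ∀ a : A, (obj a).X0 ⟶ (obj a).X1
  wid_s : ∀ a : A, wid a ≫ (obj a).s = 𝟙 _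
  wid_t : ∀ a : A, wid a ≫ (obj a).t = (map (𝟙 a)).f0
  wcomp : ∀ {a a' a'' : A}, (a ⟶ a') → (a' ⟶ a'') → ((obj a).X0 ⟶ (obj a'').X1)
  wcomp_s : ∀ {a a' a''} (α : a ⟶ a') (α' : a' ⟶ a''),
    wcomp α α' ≫ (obj a'').s = (map α).f0 ≫ (map α').f0
  wcomp_t : ∀ {a a' a''} (α : a ⟶ a') (α' : a' ⟶ a''),
    wcomp α α' ≫ (obj a'').t = (map (α ≫ α')).f0

/-- A representative of a morphism of coherent diagrams. -/
structure CohRep (X Y : CohDiag E A) where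
  app : ∀ a : A, Rep (X.obj a) (Y.obj a)
  nat : ∀ {a a' : A}, (a ⟶ a') → ((X.obj a).X0 ⟶ (Y.obj a').X1)
  nat_s : ∀ {a a'} (α : a ⟶ a'), nat α ≫ (Y.obj a').s = (app a).f0 ≫ (Y.map α).f0
  nat_t : ∀ {a a'} (α : a ⟶ a'), nat α ≫ (Y.obj a').t = (X.map α).f0 ≫ (app a').f0

/-- Witnessed equality of representatives of morphisms of coherent diagrams. -/
def CohRel {X Y : CohDiag E A} (f g : CohRep X Y) : Prop :=
  ∃ h : ∀ a : A, (X.obj a).X0 ⟶ (Y.obj a).X1,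
    ∀ a, h a ≫ (Y.obj a).s = (f.app a).f0 ∧ h a ≫ (Y.obj a).t = (g.app a).f0

theorem cohRel_equivalence (X Y : CohDiag E A) : Equivalence (CohRel (X := X) (Y := Y)) := by
  constructor
  · intro f
    exact ⟨fun a => (f.app a).f0 ≫ (Y.obj a).r, fun a =>
      ⟨by rw [Category.assoc, (Y.obj a).rs, Category.comp_id],
       by rw [Category.assoc, (Y.obj a).rt, Category.comp_id]⟩⟩
  · rintro f g ⟨h, hh⟩
    exact ⟨fun a => h a ≫ (Y.obj a).v, fun a =>
      ⟨by rw [Category.assoc, (Y.obj a).vs, (hh a).2],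
       by rw [Category.assoc, (Y.obj a).vt, (hh a).1]⟩⟩
  · rintro f g k ⟨h1, hh1⟩ ⟨h2, hh2⟩
    refine ⟨fun a => pullback.lift (h1 a) (h2 a) (by rw [(hh1 a).2, (hh2 a).1]) ≫ (Y.obj a).m,
      fun a => ⟨?_, ?_⟩⟩
    · rw [Category.assoc, (Y.obj a).ms, ← Category.assoc, pullback.lift_fst, (hh1 a).1]
    · rw [Category.assoc, (Y.obj a).mt, ← Category.assoc, pullback.lift_snd, (hh2 a).2]

instance cohSetoid (X Y : CohDiag E A) : Setoid (CohRep X Y) :=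
  ⟨CohRel, cohRel_equivalence X Y⟩

/-- The identity representative of a coherent diagram. -/
def CohRep.id (X : CohDiag E A) : CohRep X X where
  app a := Rep.id (X.obj a)
  nat {a a'} α := (X.map α).f0 ≫ (X.obj a').r
  nat_s {a a'} α := by
    rw [Category.assoc, (X.obj a').rs, Category.comp_id]; simp [Rep.id]
  nat_t {a a'} α := by
    rw [Category.assoc, (X.obj a').rt, Category.comp_id]; simp [Rep.id]

/-- Composition of representatives of morphisms of coherent diagrams. -/
def CohRep.comp {X Y Z : CohDiag E A} (f : CohRep X Y) (g : CohRep Y Z) : CohRep X Z where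
  app a := (f.app a).comp (g.app a)
  nat {a a'} α :=
    pullback.lift ((f.app a).f0 ≫ g.nat α) (f.nat α ≫ (g.app a').f1)
      (by rw [Category.assoc, Category.assoc, g.nat_t, (g.app a').hs, ← Category.assoc,
        ← Category.assoc, f.nat_s]) ≫ (Z.obj a').m
  nat_s {a a'} α := by
    rw [Category.assoc, (Z.obj a').ms, ← Category.assoc, pullback.lift_fst,
      Category.assoc, g.nat_s]
    simp [Rep.comp]
  nat_t {a a'} α := by
    rw [Category.assoc, (Z.obj a').mt, ← Category.assoc, pullback.lift_snd,
      Category.assoc, (g.app a').ht, ← Category.assoc, f.nat_t]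
    simp [Rep.comp]

theorem cohRel_comp {X Y Z : CohDiag E A} {f f' : CohRep X Y} {g g' : CohRep Y Z}
    (hf : CohRel f f') (hg : CohRel g g') : CohRel (f.comp g) (f'.comp g') := by
  obtain ⟨h1, hh1⟩ := hf
  obtain ⟨h2, hh2⟩ := hg
  refine (cohRel_equivalence X Z).trans (y := f'.comp g) ?_ ?_
  · exact ⟨fun a => h1 a ≫ (g.app a).f1, fun a =>
      ⟨by rw [Category.assoc, (g.app a).hs, ← Category.assoc, (hh1 a).1]; rfl,
       by rw [Category.assoc, (g.app a).ht, ← Category.assoc, (hh1 a).2]; rfl⟩⟩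
  · exact ⟨fun a => (f'.app a).f0 ≫ h2 a, fun a =>
      ⟨by rw [Category.assoc, (hh2 a).1]; rfl, by rw [Category.assoc, (hh2 a).2]; rfl⟩⟩

theorem cohSound {X Y : CohDiag E A} {f g : CohRep X Y}
    (hfg : ∀ a, (f.app a).f0 = (g.app a).f0) :
    (Quotient.mk (cohSetoid X Y) f) = Quotient.mk (cohSetoid X Y) g :=
  Quotient.sound ⟨fun a => (f.app a).f0 ≫ (Y.obj a).r, fun a =>
    ⟨by rw [Category.assoc, (Y.obj a).rs, Category.comp_id],
     by rw [Category.assoc, (Y.obj a).rt, Category.comp_id, hfg a]⟩⟩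

instance : Category.{max u' v' v} (CohDiag E A) where
  Hom X Y := _root_.Quotient (cohSetoid X Y)
  id X := Quotient.mk _ (CohRep.id X)
  comp {X Y Z} := Quotient.map₂ CohRep.comp (fun _ _ hf _ _ hg => cohRel_comp hf hg)
  id_comp {X Y} f := by
    refine Quotient.inductionOn f (fun f => cohSound (fun a => ?_))
    simp [CohRep.comp, CohRep.id, Rep.comp, Rep.id]
  comp_id {X Y} f := by
    refine Quotient.inductionOn f (fun f => cohSound (fun a => ?_))
    simp [CohRep.comp, CohRep.id, Rep.comp, Rep.id]
  assoc {W X Y Z} f g h := by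
    refine Quotient.inductionOn₃ f g h (fun f g h => cohSound (fun a => ?_))
    simp [CohRep.comp, Rep.comp]

variable {A' : Type u'} [Category.{v'} A']

/-- Restriction of a coherent diagram along a functor. -/
def CohDiag.restrict (u : A' ⥤ A) (X : CohDiag E A) : CohDiag E A' where
  obj a := X.obj (u.obj a)
  map {a a'} α := X.map (u.map α)
  wid a := X.wid (u.obj a)
  wid_s a := X.wid_s (u.obj a)
  wid_t a := by
    show X.wid (u.obj a) ≫ (X.obj (u.obj a)).t = (X.map (u.map (𝟙 a))).f0
    rw [show u.map (𝟙 a) = 𝟙 (u.obj a) from u.map_id a]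
    exact X.wid_t (u.obj a)
  wcomp {a a' a''} α α' := X.wcomp (u.map α) (u.map α')
  wcomp_s α α' := X.wcomp_s _ _
  wcomp_t {a a' a''} α α' := by
    show X.wcomp (u.map α) (u.map α') ≫ (X.obj (u.obj a'')).t = (X.map (u.map (α ≫ α'))).f0
    rw [show u.map (α ≫ α') = u.map α ≫ u.map α' from u.map_comp α α']
    exact X.wcomp_t _ _

/-- Restriction of a representative along a functor. -/
def CohRep.restrict (u : A' ⥤ A) {X Y : CohDiag E A} (f : CohRep X Y) :
    CohRep (X.restrict u) (Y.restrict u) where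
  app a := f.app (u.obj a)
  nat {a a'} α := f.nat (u.map α)
  nat_s α := f.nat_s _
  nat_t α := f.nat_t _

/-- The restriction functor `E_ex(A) ⥤ E_ex(A')` along a functor `u : A' ⥤ A`. -/
def restrictFunctor (E : Type u) [Category.{v} E] [HasFiniteLimits E] (u : A' ⥤ A) :
    CohDiag E A ⥤ CohDiag E A' where
  obj X := X.restrict u
  map {X Y} := Quotient.map (sa := cohSetoid X Y) (sb := cohSetoid _ _) (CohRep.restrict u) (by
    rintro f g ⟨h, hh⟩
    exact ⟨fun a => h (u.obj a), fun a => hh (u.obj a)⟩)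
  map_id X := cohSound (fun a => rfl)
  map_comp {X Y Z} f g :=
    Quotient.inductionOn₂ f g (fun f g => cohSound (fun a => rfl))

/-- The constant coherent diagram on an object of `E_ex`. -/
def constObj (A : Type u') [Category.{v'} A] (X : PseudoEqRel E) : CohDiag E A where
  obj _ := X
  map _ := Rep.id X
  wid _ := X.r
  wid_s _ := X.rs
  wid_t _ := by rw [X.rt]; rfl
  wcomp _ _ := X.r
  wcomp_s _ _ := by rw [X.rs]; simp [Rep.id]
  wcomp_t _ _ := by rw [X.rt]; rfl

/-- The constant representative on a representative. -/
def constRep (A : Type u') [Category.{v'} A] {X Y : PseudoEqRel E} (f : Rep X Y) :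
    CohRep (constObj A X) (constObj A Y) where
  app _ := f
  nat _ := f.f0 ≫ Y.r
  nat_s _ := by
    show (f.f0 ≫ Y.r) ≫ Y.s = f.f0 ≫ (Rep.id Y).f0
    rw [Category.assoc]
    show f.f0 ≫ Y.r ≫ Y.s = f.f0 ≫ (Rep.id Y).f0
    rw [Y.rs]; simp [Rep.id]
  nat_t _ := by
    show (f.f0 ≫ Y.r) ≫ Y.t = (Rep.id X).f0 ≫ f.f0
    rw [Category.assoc]
    show f.f0 ≫ Y.r ≫ Y.t = (Rep.id X).f0 ≫ f.f0
    rw [Y.rt]; simp [Rep.id]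

/-- The constant-diagram functor `p_A^* : E_ex ⥤ E_ex(A)`. -/
def constDiag (E : Type u) [Category.{v} E] [HasFiniteLimits E]
    (A : Type u') [Category.{v'} A] : PseudoEqRel E ⥤ CohDiag E A where
  obj X := constObj A X
  map {X Y} := Quotient.map (sa := repSetoid X Y) (sb := cohSetoid _ _) (constRep A)
    (by rintro f g ⟨h, h1, h2⟩; exact ⟨fun _ => h, fun _ => ⟨h1, h2⟩⟩)
  map_id X := cohSound (fun a => rfl)
  map_comp {X Y Z} f g :=
    Quotient.inductionOn₂ f g (fun f g => cohSound (fun a => rfl))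

end

end ExCompletion

/-!
A morphism of coherent diagrams consists of pointwise morphisms together with naturality
witnesses, but two of them are identified as soon as they agree pointwise. So if every
component `φ_a` is invertible in `E_ex`, the pointwise inverses `ψ_a` form an inverse of `φ`
provided they admit naturality witnesses, i.e. `ψ_a X_α ∼ Y_α ψ_{a'}`. Witnessed equality of
maps `C ⟶ Z₀` is equality of the induced maps from the discrete relation on `C` to `Z` in
`E_ex`, and there the required equation follows from the naturality of `φ` by conjugating
with the isomorphisms `φ_a`.
-/

namespace ExCompletion

variable {E : Type u} [Category.{v} E] [HasFiniteLimits E]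

namespace PseudoEqRel

noncomputable def genericPoint (Z : PseudoEqRel E) : discreteInclusion.obj Z.X0 ⟶ Z :=
  ⟦⟨𝟙 Z.X0, Z.r, by simp [discreteInclusion, Z.rs], by simp [discreteInclusion, Z.rt]⟩⟧

theorem genericPoint_comp_mk {Z Z' : PseudoEqRel E} (f : Rep Z Z') :
    Z.genericPoint ≫ ⟦f⟧ = discreteInclusion.map f.f0 ≫ Z'.genericPoint :=
  Quotient.sound ⟨f.f0 ≫ Z'.r, by simp [discreteInclusion, Rep.comp, Z'.rs],
    by simp [discreteInclusion, Rep.comp, Z'.rt]⟩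

theorem map_comp_genericPoint_eq_iff {Z : PseudoEqRel E} {C : E} (f g : C ⟶ Z.X0) :
    discreteInclusion.map f ≫ Z.genericPoint = discreteInclusion.map g ≫ Z.genericPoint ↔
      ∃ h : C ⟶ Z.X1, h ≫ Z.s = f ∧ h ≫ Z.t = g := by
  change Quotient.mk _ _ = Quotient.mk _ _ ↔ _
  rw [Quotient.eq]
  simp [discreteInclusion, Setoid.r, RepRel, Rep.comp]

end PseudoEqRel

open PseudoEqRel

variable {A : Type u'} [Category.{v'} A]

/-- Reducible, so that `(evaluation a).obj X` and `X.obj a` agree up to instance transparency. -/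
abbrev evaluation (a : A) : CohDiag E A ⥤ PseudoEqRel E where
  obj X := X.obj a
  map := Quotient.map (fun f => f.app a) fun _ _ ⟨h, hh⟩ => ⟨h a, hh a⟩
  map_id _ := rfl
  map_comp f g := Quotient.inductionOn₂ f g fun _ _ => rfl

theorem evaluation_map_restrictFunctor_map {A' : Type u'} [Category.{v'} A'] (u : A' ⥤ A)
    (a : A') {X Y : CohDiag E A} (f : X ⟶ Y) :
    (evaluation a).map ((restrictFunctor E u).map f) = (evaluation (u.obj a)).map f :=
  Quotient.inductionOn f fun _ => rfl

theorem CohDiag.hom_ext {X Y : CohDiag E A} {f g : X ⟶ Y}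
    (h : ∀ a, (evaluation a).map f = (evaluation a).map g) : f = g := by
  induction f using Quotient.inductionOn
  induction g using Quotient.inductionOn
  choose w hw using fun a => Quotient.exact (h a)
  exact Quotient.sound ⟨w, hw⟩

theorem exists_naturality_witness_iff {X Y : CohDiag E A}
    (app : ∀ a, Rep (X.obj a) (Y.obj a)) {a a' : A} (α : a ⟶ a') :
    (∃ h : (X.obj a).X0 ⟶ (Y.obj a').X1,
        h ≫ (Y.obj a').s = (app a).f0 ≫ (Y.map α).f0 ∧
        h ≫ (Y.obj a').t = (X.map α).f0 ≫ (app a').f0) ↔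
      (X.obj a).genericPoint ≫ ⟦app a⟧ ≫ ⟦Y.map α⟧ =
        (X.obj a).genericPoint ≫ ⟦X.map α⟧ ≫ ⟦app a'⟧ := by
  simp only [← Category.assoc, genericPoint_comp_mk]
  simp only [Category.assoc, genericPoint_comp_mk, ← Functor.map_comp_assoc]
  exact (map_comp_genericPoint_eq_iff _ _).symm

variable {X Y : CohDiag E A}

theorem genericPoint_naturality (f : X ⟶ Y) {a a' : A} (α : a ⟶ a') :
    (X.obj a).genericPoint ≫ (evaluation a).map f ≫ ⟦Y.map α⟧ =
      (X.obj a).genericPoint ≫ ⟦X.map α⟧ ≫ (evaluation a').map f := by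
  induction f using Quotient.inductionOn with
  | h φ => exact (exists_naturality_witness_iff φ.app α).mp ⟨φ.nat α, φ.nat_s α, φ.nat_t α⟩

theorem exists_inv_naturality_witness (f : X ⟶ Y) [∀ a, IsIso ((evaluation a).map f)]
    {a a' : A} (α : a ⟶ a') :
    ∃ h : (Y.obj a).X0 ⟶ (X.obj a').X1,
      h ≫ (X.obj a').s = (Quotient.out (inv ((evaluation a).map f))).f0 ≫ (X.map α).f0 ∧
      h ≫ (X.obj a').t = (Y.map α).f0 ≫ (Quotient.out (inv ((evaluation a').map f))).f0 := by
  refine (exists_naturality_witness_iff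
    (fun a => Quotient.out (inv ((evaluation a).map f))) α).mpr ?_
  set ψ := Quotient.out (inv ((evaluation a).map f))
  have hψ : (⟦ψ⟧ : Y.obj a ⟶ X.obj a) = inv ((evaluation a).map f) := Quotient.out_eq _
  simp only [Quotient.out_eq]
  calc (Y.obj a).genericPoint ≫ ⟦ψ⟧ ≫ ⟦X.map α⟧
      = discreteInclusion.map ψ.f0 ≫ (X.obj a).genericPoint ≫ ⟦X.map α⟧ ≫
          (evaluation a').map f ≫ inv ((evaluation a').map f) := by
        rw [IsIso.hom_inv_id, Category.comp_id, ← Category.assoc, genericPoint_comp_mk,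
          Category.assoc]
    _ = (Y.obj a).genericPoint ≫ ⟦ψ⟧ ≫ (evaluation a).map f ≫ ⟦Y.map α⟧ ≫
          inv ((evaluation a').map f) := by
        rw [← reassoc_of% (genericPoint_naturality f α), ← Category.assoc (Y.obj a).genericPoint,
          genericPoint_comp_mk, Category.assoc]
    _ = (Y.obj a).genericPoint ≫ ⟦Y.map α⟧ ≫ inv ((evaluation a').map f) := by
        rw [hψ, IsIso.inv_hom_id_assoc]

noncomputable def pointwiseInv (f : X ⟶ Y) [∀ a, IsIso ((evaluation a).map f)] : CohRep Y X where
  app a := Quotient.out (inv ((evaluation a).map f))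
  nat α := (exists_inv_naturality_witness f α).choose
  nat_s α := (exists_inv_naturality_witness f α).choose_spec.1
  nat_t α := (exists_inv_naturality_witness f α).choose_spec.2

theorem evaluation_map_pointwiseInv (f : X ⟶ Y) [∀ a, IsIso ((evaluation a).map f)] (a : A) :
    (evaluation a).map ⟦pointwiseInv f⟧ = inv ((evaluation a).map f) :=
  Quotient.out_eq _

theorem isIso_of_forall_isIso_evaluation_map (f : X ⟶ Y)
    [∀ a, IsIso ((evaluation a).map f)] : IsIso f := by
  refine ⟨⟦pointwiseInv f⟧, CohDiag.hom_ext fun a => ?_, CohDiag.hom_ext fun a => ?_⟩ <;>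
    rw [Functor.map_comp, CategoryTheory.Functor.map_id, evaluation_map_pointwiseInv]
  exacts [IsIso.hom_inv_id _, IsIso.inv_hom_id _]

end ExCompletion

open ExCompletion in
/-- For the prederivator `E_ex`, the restriction functor along the
inclusion of objects `incl_A : ob(A) → A`, namely `incl_A^* : E_ex(A) ⥤ E_ex(ob A)`,
is conservative: a morphism of coherent `A`-diagrams whose restriction to the discrete
category of objects is an isomorphism is itself an isomorphism (axiom Der2). -/
theorem restriction_to_objects_reflectsIsomorphisms
    (E : Type u) [Category.{v} E] [HasFiniteLimits E]
    (A : Type u') [Category.{u'} A] :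
    (restrictFunctor (A := A) (A' := Discrete A) E
      (Discrete.functor (fun a => a))).ReflectsIsomorphisms := by
  refine ⟨fun f _ => ?_⟩
  have (a : A) : IsIso ((evaluation a).map f) := by
    have := Functor.map_isIso (evaluation (Discrete.mk a))
      ((restrictFunctor E (Discrete.functor fun a => a)).map f)
    rwa [evaluation_map_restrictFunctor_map] at this
  exact isIso_of_forall_isIso_evaluation_map f
end

section
/- For any prederivator D and set I, the class of D-equivalences over I is saturated: if a morphism u in Cat/I becomes an isomorphism in the localization of Cat/I at the D-equivalences over I, then u is itself a D-equivalence over I. Consequently the D-equivalences over I satisfy 2-out-of-3, 2-out-of-6, and closure under retracts. -/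
open CategoryTheory

universe u

namespace Derivator

/-- The data of a prederivator: a strict 2-functor `Cat^op → CAT`. -/
structure PreDer : Type (u + 2) where
  Dia : Cat.{u, u} → Type (u + 1)
  str : ∀ A, Category.{u} (Dia A)
  res : ∀ {A B : Cat.{u, u}}, (A ⟶ B) → (Dia B ⥤ Dia A)
  res_id : ∀ A : Cat.{u, u}, res (𝟙 A) = 𝟭 (Dia A)
  res_comp : ∀ {A B C : Cat.{u, u}} (F : A ⟶ B) (G : B ⟶ C), res (F ≫ G) = res G ⋙ res F
  transf : ∀ {A B : Cat.{u, u}} {F G : A ⟶ B}, (F ⟶ G) → (res F ⟶ res G)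
  transf_id : ∀ {A B : Cat.{u, u}} (F : A ⟶ B), transf (𝟙 F) = 𝟙 (res F)
  transf_comp : ∀ {A B : Cat.{u, u}} {F G H : A ⟶ B} (α : F ⟶ G) (β : G ⟶ H),
    transf (α ≫ β) = transf α ≫ transf β

attribute [instance] PreDer.str

/-- The data of left Kan extensions (Der3L) for a prederivator. -/
structure LanData (D : PreDer.{u}) : Type (u + 1) where
  lan : ∀ {A B : Cat.{u, u}}, (A ⟶ B) → (D.Dia A ⥤ D.Dia B)
  adj : ∀ {A B : Cat.{u, u}} (F : A ⟶ B), lan F ⊣ D.res F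

variable (D : PreDer.{u}) (L : LanData D)

/-- The component at `X` of the canonical mate `q_! p^* → v^* u_!` associated to a
square with a 2-cell `μ : u ∘ p ⟶ v ∘ q`. -/
def mateApp {P A B C : Cat.{u, u}} (p : P ⟶ A) (q : P ⟶ B) (F : A ⟶ C) (G : B ⟶ C)
    (μ : p ≫ F ⟶ q ≫ G) (X : D.Dia A) :
    (L.lan q).obj ((D.res p).obj X) ⟶ (D.res G).obj ((L.lan F).obj X) :=
  ((L.adj q).homEquiv _ _).symm
    ((D.res p).map ((L.adj F).unit.app X) ≫
      eqToHom (Functor.congr_obj (D.res_comp p F).symm ((L.lan F).obj X)) ≫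
      (D.transf μ).app ((L.lan F).obj X) ≫
      eqToHom (Functor.congr_obj (D.res_comp q G) ((L.lan F).obj X)))

/-- The inclusion of the discrete category of objects of `A` into `A`, as a 1-cell
of `Cat`. -/
def objIncl (A : Cat.{u, u}) : Cat.of (Discrete A) ⟶ A :=
  (Discrete.functor (fun a => a)).toCatHom

/-- Axiom (Der1): `D` preserves products indexed by projective sets. -/
def Der1 (D : PreDer.{u}) : Prop :=
  ∀ (I : Type u),
    (∀ (β : Type u) (f : β → I), Function.Surjective f → ∃ g : I → β, ∀ i, f (g i) = i) →
    ∀ (Aι : I → Cat.{u, u}),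
      (Functor.pi' fun i =>
        D.res (A := Aι i) (B := Cat.of (Σ i : I, (Aι i : Type u)))
          (CategoryTheory.Sigma.incl (C := fun i : I => (Aι i : Type u)) i).toCatHom).IsEquivalence

/-- Axiom (Der2): restriction to the discrete category of objects is conservative. -/
def Der2 (D : PreDer.{u}) : Prop :=
  ∀ A : Cat.{u, u}, (D.res (objIncl A)).ReflectsIsomorphisms

/-- Axiom (Der4L): comma squares whose lower-left corner is discrete are `D`-exact. -/
def Der4L : Prop :=
  ∀ {A C : Cat.{u, u}} (F : A ⟶ C) (I : Type u) (G : Cat.of (Discrete I) ⟶ C)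
    (X : D.Dia A),
    IsIso (mateApp D L
      (P := Cat.of (Comma (F.toFunctor : A ⥤ C) (G.toFunctor : Discrete I ⥤ C)))
      (Comma.fst (F.toFunctor : A ⥤ C) (G.toFunctor : Discrete I ⥤ C)).toCatHom
      (Comma.snd (F.toFunctor : A ⥤ C) (G.toFunctor : Discrete I ⥤ C)).toCatHom
      F G (Comma.natTrans (F.toFunctor : A ⥤ C) (G.toFunctor : Discrete I ⥤ C)).toCatHom₂ X)

/-- A left derivator: a prederivator with left Kan extensions satisfying
(Der1), (Der2) and (Der4L). -/
def IsLeftDerivator : Prop := Der1 D ∧ Der2 D ∧ Der4L D L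

/-- `u : A ⟶ B` lying over the discrete category on `I` (via `v : B ⟶ I`) is a
`D`-equivalence over `I`: `u^*` is fully faithful on the image of `v^*`. -/
def IsDEquiv (D : PreDer.{u}) {A B : Cat.{u, u}} (I : Type u) (F : A ⟶ B)
    (V : B ⟶ Cat.of (Discrete I)) : Prop :=
  ∀ X Y : D.Dia (Cat.of (Discrete I)),
    Function.Bijective
      (fun g : (D.res V).obj X ⟶ (D.res V).obj Y => (D.res F).map g)

end Derivator

namespace Derivator

/-- The `D`-equivalences over `I`, as a morphism property of `Cat/I`. -/
def dEquivProp (D : PreDer.{u}) (I : Type u) :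
    MorphismProperty (Over (Cat.of (Discrete I))) :=
  fun _ Y f => IsDEquiv D I f.left Y.hom

end Derivator

/-! The presheaves `(v : A → I) ↦ D(A)(v^* X, v^* Y)` on `Cat/I`, for `X, Y ∈ D(I)`, jointly
detect the `D`-equivalences: `f` is one iff each of them sends `f` to a bijection. So each of
them inverts the `D`-equivalences and factors through the localization; a morphism inverted by
the localization is then sent to a bijection by all of them, i.e. it is a `D`-equivalence. Being the preimage of the isomorphisms under the localization functor, the
`D`-equivalences inherit 2-out-of-3, 2-out-of-6 and closure under retracts from isomorphisms. -/

namespace CategoryTheory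

lemma isIso_of_isIso_comp_of_isIso_comp {C : Type*} [Category C] {X Y Z W : C}
    (f : X ⟶ Y) (g : Y ⟶ Z) (h : Z ⟶ W) [IsIso (f ≫ g)] [IsIso (g ≫ h)] : IsIso g :=
  have : IsSplitEpi g := .mk' ⟨inv (f ≫ g) ≫ f, by rw [Category.assoc, IsIso.inv_hom_id]⟩
  have : IsSplitMono g := .mk' ⟨h ≫ inv (g ≫ h), by rw [← Category.assoc, IsIso.hom_inv_id]⟩
  isIso_of_epi_of_isSplitMono g

namespace MorphismProperty

variable {C : Type*} [Category C]

lemma twoOutOfSix_of_mem_middle (W : MorphismProperty C) [W.HasTwoOutOfThreeProperty]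
    {X Y Z T : C} {f : X ⟶ Y} {g : Y ⟶ Z} {h : Z ⟶ T}
    (hg : W g) (hfg : W (f ≫ g)) (hgh : W (g ≫ h)) :
    W f ∧ W g ∧ W h ∧ W (f ≫ g ≫ h) :=
  have hf := W.of_postcomp f g hg hfg
  ⟨hf, hg, W.of_precomp g h hg hgh, W.comp_mem _ _ hf hgh⟩

lemma isomorphisms_inverseImage_twoOutOfSix {D : Type*} [Category D] (F : C ⥤ D)
    {X Y Z T : C} {f : X ⟶ Y} {g : Y ⟶ Z} {h : Z ⟶ T}
    (hfg : (isomorphisms D).inverseImage F (f ≫ g))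
    (hgh : (isomorphisms D).inverseImage F (g ≫ h)) :
    (isomorphisms D).inverseImage F f ∧ (isomorphisms D).inverseImage F g ∧
      (isomorphisms D).inverseImage F h ∧ (isomorphisms D).inverseImage F (f ≫ g ≫ h) := by
  have hg : IsIso (F.map g) := by
    simp only [inverseImage_iff, isomorphisms.iff, Functor.map_comp] at hfg hgh
    exact isIso_of_isIso_comp_of_isIso_comp (F.map f) (F.map g) (F.map h)
  exact twoOutOfSix_of_mem_middle _ hg hfg hgh

/-- A class of morphisms detected as isomorphisms by a family of functors is saturated. -/
lemma eq_inverseImage_isomorphisms_Q (W : MorphismProperty C) {ι : Type*} {E : ι → Type*}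
    [∀ k, Category (E k)] (F : ∀ k, C ⥤ E k)
    (hW : ∀ {X Y : C} (f : X ⟶ Y), W f ↔ ∀ k, IsIso ((F k).map f)) :
    W = (isomorphisms W.Localization).inverseImage W.Q := by
  ext X Y f
  refine ⟨W.Q_inverts f, fun (hf : IsIso (W.Q.map f)) => (hW f).2 fun k => ?_⟩
  have hFk : W.IsInvertedBy (F k) := fun _ _ f hf => (hW f).1 hf k
  rw [← Localization.Construction.fac (F k) hFk, Functor.comp_map]
  infer_instance

end MorphismProperty

end CategoryTheory

namespace Derivator

variable (D : PreDer.{u}) (I : Type u)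

lemma res_over_obj_eq {A B : Over (Cat.of (Discrete I))} (f : A ⟶ B)
    (Z : D.Dia (Cat.of (Discrete I))) :
    (D.res A.hom).obj Z = (D.res f.left).obj ((D.res B.hom).obj Z) := by
  rw [← Over.w f, D.res_comp]
  rfl

def resHomFunctor (X Y : D.Dia (Cat.of (Discrete I))) :
    (Over (Cat.of (Discrete I)))ᵒᵖ ⥤ Type u where
  obj A := (D.res A.unop.hom).obj X ⟶ (D.res A.unop.hom).obj Y
  map f := TypeCat.ofHom fun g =>
    (Iso.homCongr (eqToIso (res_over_obj_eq D I f.unop X)).symm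
      (eqToIso (res_over_obj_eq D I f.unop Y)).symm) ((D.res f.unop.left).map g)
  map_id A := by
    ext g
    have h := Functor.congr_hom (D.res_id A.unop.left) g
    simp [h]
  map_comp f g := by
    ext x
    have h := Functor.congr_hom (D.res_comp g.unop.left f.unop.left) x
    simp [h, eqToHom_map]

lemma dEquivProp_iff {A B : Over (Cat.of (Discrete I))} (f : A ⟶ B) :
    dEquivProp D I f ↔
      ∀ XY : D.Dia (Cat.of (Discrete I)) × D.Dia (Cat.of (Discrete I)),
        IsIso ((resHomFunctor D I XY.1 XY.2).rightOp.map f) := by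
  simp only [Functor.rightOp_map, isIso_op_iff, isIso_iff_bijective, Prod.forall]
  exact forall₂_congr fun X Y => (Equiv.comp_bijective _ _).symm

end Derivator

open Derivator in
/-- For any prederivator `D` and set `I`, the class of
`D`-equivalences over `I` is saturated: any morphism of `Cat/I` that becomes an
isomorphism in the localization of `Cat/I` at the `D`-equivalences over `I` is itself a
`D`-equivalence over `I`.  Consequently the `D`-equivalences over `I` satisfy
2-out-of-3, 2-out-of-6, and are closed under retracts. -/
theorem dEquiv_saturated
    (D : PreDer.{u}) (I : Type u) :
    (∀ {X Y : Over (Cat.of (Discrete I))} (f : X ⟶ Y),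
        IsIso ((dEquivProp D I).Q.map f) → dEquivProp D I f) ∧
    (dEquivProp D I).HasTwoOutOfThreeProperty ∧
    (∀ {X Y Z W : Over (Cat.of (Discrete I))} (f : X ⟶ Y) (g : Y ⟶ Z) (h : Z ⟶ W),
        dEquivProp D I (f ≫ g) → dEquivProp D I (g ≫ h) →
        dEquivProp D I f ∧ dEquivProp D I g ∧ dEquivProp D I h ∧
          dEquivProp D I (f ≫ g ≫ h)) ∧
    (∀ {X Y X' Y' : Over (Cat.of (Discrete I))} (f : X ⟶ Y) (f' : X' ⟶ Y')
        (i : X ⟶ X') (r : X' ⟶ X) (j : Y ⟶ Y') (s : Y' ⟶ Y),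
        i ≫ r = 𝟙 X → j ≫ s = 𝟙 Y → i ≫ f' = f ≫ j → f' ≫ s = r ≫ f →
        dEquivProp D I f' → dEquivProp D I f) := by
  have hW : dEquivProp D I =
      (MorphismProperty.isomorphisms _).inverseImage (dEquivProp D I).Q :=
    MorphismProperty.eq_inverseImage_isomorphisms_Q _ _ (dEquivProp_iff D I)
  have : (dEquivProp D I).HasTwoOutOfThreeProperty := hW ▸ inferInstance
  have : (dEquivProp D I).IsStableUnderRetracts := hW ▸ inferInstance
  refine ⟨fun f hf => hW ▸ hf, inferInstance, fun f g h hfg hgh => ?_,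
    fun f f' i r j s hi hj hij hrs hf' => ?_⟩
  · rw [hW] at hfg hgh ⊢
    exact MorphismProperty.isomorphisms_inverseImage_twoOutOfSix _ hfg hgh
  · exact MorphismProperty.of_retract
      { i := Arrow.homMk i j hij, r := Arrow.homMk r s hrs.symm
        retract := by ext <;> simp [hi, hj] } hf'
end

section
/- If f : I → J is a function between sets and u : A → B is a D-equivalence over J for a left derivator D, then the pullback f^*(u) : f^*A → f^*B is a D-equivalence over I. -/
open CategoryTheory

universe u

namespace Derivator

universe v₁ u₁ v₂ u₂ v₃ u₃

/-- The strict pullback of categories along two functors into a common category. -/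
structure CatPB {C : Type u₁} {B : Type u₂} {E : Type u₃}
    [Category.{v₁} C] [Category.{v₂} B] [Category.{v₃} E]
    (V : C ⥤ E) (F : B ⥤ E) where
  c : C
  b : B
  h : V.obj c = F.obj b

instance CatPB.category {C : Type u₁} {B : Type u₂} {E : Type u₃}
    [Category.{v₁} C] [Category.{v₂} B] [Category.{v₃} E]
    (V : C ⥤ E) (F : B ⥤ E) : Category (CatPB V F) where
  Hom x y := {fg : (x.c ⟶ y.c) × (x.b ⟶ y.b) //
    V.map fg.1 = eqToHom x.h ≫ F.map fg.2 ≫ eqToHom y.h.symm}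
  id x := ⟨(𝟙 x.c, 𝟙 x.b), by simp⟩
  comp {x y z} f g := ⟨(f.1.1 ≫ g.1.1, f.1.2 ≫ g.1.2), by
    simp only [Functor.map_comp, f.2, g.2, Category.assoc, eqToHom_trans_assoc,
      eqToHom_refl, Category.id_comp]⟩
  id_comp f := by apply Subtype.ext; simp
  comp_id f := by apply Subtype.ext; simp
  assoc f g h := by apply Subtype.ext; simp

/-- First projection of the strict pullback of categories. -/
def CatPB.fst {C : Type u₁} {B : Type u₂} {E : Type u₃}
    [Category.{v₁} C] [Category.{v₂} B] [Category.{v₃} E]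
    (V : C ⥤ E) (F : B ⥤ E) : CatPB V F ⥤ C where
  obj x := x.c
  map f := f.1.1

/-- The discrete functor induced by a function between sets. -/
def discMap {I J : Type u} (f : I → J) : Cat.of (Discrete I) ⟶ Cat.of (Discrete J) :=
  (Discrete.functor (fun i => (⟨f i⟩ : Discrete J))).toCatHom

/-- The pullback `f^*(u)` of a functor `u : A ⟶ B` over `Discrete J` along a function
`f : I → J`. -/
def pbFunctor {I J : Type u} (f : I → J) {A B : Cat.{u, u}} (F : A ⟶ B)
    (V : B ⟶ Cat.of (Discrete J)) :
    CatPB (((discMap f).toFunctor : Discrete I ⥤ Discrete J)) (((F ≫ V).toFunctor : ↑A ⥤ Discrete J)) ⥤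
      CatPB (((discMap f).toFunctor : Discrete I ⥤ Discrete J)) ((V.toFunctor : ↑B ⥤ Discrete J)) where
  obj x := ⟨x.c, (F.toFunctor : ↑A ⥤ ↑B).obj x.b, x.h⟩
  map {x y} g := ⟨(g.1.1, (F.toFunctor : ↑A ⥤ ↑B).map g.1.2), g.2⟩
  map_id x := by apply Subtype.ext; exact Prod.ext rfl ((F.toFunctor : ↑A ⥤ ↑B).map_id x.b)
  map_comp g h := by apply Subtype.ext; exact Prod.ext rfl ((F.toFunctor : ↑A ⥤ ↑B).map_comp g.1.2 h.1.2)

end Derivator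

/-!
Over a discrete base `K`, a category `B` is the disjoint union of its fibers `B_k`, so by (Der1)
a diagram on `B` is the same as a family of diagrams on the `B_k`. Hence `u` is a
`D`-equivalence over `K` iff each fiber `u_k : A_k ⥤ B_k` is a `D`-equivalence over the point.
The fiber of `f^*B` over `i` is isomorphic to the fiber of `B` over `f i`, compatibly with `u`,
so the fibers of `f^*u` are among those of `u`.
-/

open CategoryTheory Function

theorem Function.Bijective.of_piMap {ι : Type*} {α β : ι → Type*} {f : ∀ i, α i → β i}
    (h : Bijective (Pi.map f)) (k : ι) (hne : ∀ i, i ≠ k → Nonempty (α i)) :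
    Bijective (f k) := by
  classical
  let extend (a : α k) : ∀ i, α i := fun i => if hi : i = k then hi ▸ a else (hne i hi).some
  refine ⟨fun a b hab => ?_, fun t => ?_⟩
  · have : Pi.map f (extend a) = Pi.map f (extend b) := by
      funext i
      by_cases hi : i = k
      · subst hi; simpa [extend] using hab
      · simp [extend, hi]
    simpa [extend] using congrFun (h.1 this) k
  · obtain ⟨s, hs⟩ := h.2 fun i => if hi : i = k then hi ▸ t else f i (hne i hi).some
    exact ⟨s k, by simpa using congrFun hs k⟩

namespace CategoryTheory.Functor

variable {C D C' D' : Type*} [Category C] [Category D] [Category C'] [Category D']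

theorem map_bijective_of_iso (G : C ⥤ D) {P Q P' Q' : C} (α : P ≅ P') (β : Q ≅ Q')
    (h : Bijective (G.map : (P ⟶ Q) → _)) : Bijective (G.map : (P' ⟶ Q') → _) := by
  have : (G.map : (P' ⟶ Q') → _) =
      (G.mapIso α).homCongr (G.mapIso β) ∘ G.map ∘ (α.homCongr β).symm := by
    funext g
    simp
  rw [this]
  exact ((Equiv.bijective _).comp h).comp (Equiv.bijective _)

theorem map_bijective_iff_of_comp_eq (G : C ⥤ D) (G' : C' ⥤ D') (R : C ⥤ C') (S : D ⥤ D')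
    [R.Full] [R.Faithful] [S.Full] [S.Faithful] (hsq : R ⋙ G' = G ⋙ S) (P Q : C) :
    Bijective (G.map : (P ⟶ Q) → _) ↔ Bijective (G'.map : (R.obj P ⟶ R.obj Q) → _) := by
  have hR := (FullyFaithful.ofFullyFaithful R).map_bijective P Q
  have hS := (FullyFaithful.ofFullyFaithful S).map_bijective (G.obj P) (G.obj Q)
  have hcomp : G'.map ∘ (R.map : (P ⟶ Q) → _) =
      ((eqToIso (congr_obj hsq P)).homCongr (eqToIso (congr_obj hsq Q))).symm ∘ S.map ∘ G.map := by
    funext g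
    simpa using congr_hom hsq g
  rw [← Bijective.of_comp_iff _ hR, hcomp, Bijective.of_comp_iff' (Equiv.bijective _),
    Bijective.of_comp_iff' hS]

theorem comp_eq_id_of_faithful (F : C ⥤ D) (G : D ⥤ C) [F.Faithful]
    (hGF : G ⋙ F = 𝟭 D) (hobj : ∀ X, G.obj (F.obj X) = X) : F ⋙ G = 𝟭 C := by
  refine Functor.ext hobj fun X Y q => F.map_injective ?_
  simpa [eqToHom_map] using congr_hom hGF (F.map q)

end CategoryTheory.Functor

namespace Derivator

variable {K : Type u}

section Restriction

variable (D : PreDer.{u})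

theorem res_obj_comp {C₁ C₂ C₃ : Cat.{u, u}} (F : C₁ ⟶ C₂) (G : C₂ ⟶ C₃) (X : D.Dia C₃) :
    (D.res F).obj ((D.res G).obj X) = (D.res (F ≫ G)).obj X :=
  (Functor.congr_obj (D.res_comp F G) X).symm

def resEquivOfIso {C C' : Cat.{u, u}} (e : C ≅ C') : D.Dia C' ≌ D.Dia C :=
  CategoryTheory.Equivalence.mk (D.res e.hom) (D.res e.inv)
    (eqToIso (by rw [← D.res_comp, e.inv_hom_id, D.res_id]))
    (eqToIso (by rw [← D.res_comp, e.hom_inv_id, D.res_id]))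

instance isEquivalence_res_hom {C C' : Cat.{u, u}} (e : C ≅ C') : (D.res e.hom).IsEquivalence :=
  (resEquivOfIso D e).isEquivalence_functor

end Restriction

def toPt (C : Cat.{u, u}) : C ⟶ Cat.of (Discrete PUnit.{u + 1}) :=
  (Functor.star C).toCatHom

theorem eq_toPt {C : Cat.{u, u}} (G : C ⟶ Cat.of (Discrete PUnit.{u + 1})) : G = toPt C :=
  Cat.ext (Functor.punit_ext' _ _)

section Fibers

variable {A B : Cat.{u, u}}

abbrev Fib (W : B ⟶ Cat.of (Discrete K)) (k : K) : Cat.{u, u} :=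
  Cat.of (ObjectProperty.FullSubcategory fun b : B => W.toFunctor.obj b = ⟨k⟩)

def fibIncl (W : B ⟶ Cat.of (Discrete K)) (k : K) : Fib W k ⟶ B :=
  (ObjectProperty.ι _).toCatHom

theorem fibIncl_comp (W : B ⟶ Cat.of (Discrete K)) (k : K) :
    fibIncl W k ≫ W = toPt _ ≫ discMap fun _ => k :=
  Cat.ext (CategoryTheory.Functor.ext (fun b => b.property) fun _ _ _ =>
    (Discrete.instSubsingletonDiscreteHom _ _).elim _ _)

def fiberMap (F : A ⟶ B) (V : B ⟶ Cat.of (Discrete K)) (k : K) : Fib (F ≫ V) k ⟶ Fib V k :=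
  (ObjectProperty.lift _ (ObjectProperty.ι _ ⋙ F.toFunctor) fun a => a.property).toCatHom

end Fibers

section SigmaDecomposition

variable {B : Cat.{u, u}} (W : B ⟶ Cat.of (Discrete K))

abbrev sigmaFibIncl (k : K) : Fib W k ⟶ Cat.of (Σ k, (Fib W k : Type u)) :=
  (Sigma.incl (C := fun k => (Fib W k : Type u)) k).toCatHom

def sigmaFibHomMk {k k' : K} (e : k = k') (x : Fib W k) (y : Fib W k') (g : x.obj ⟶ y.obj) :
    (⟨k, x⟩ : Σ k, (Fib W k : Type u)) ⟶ ⟨k', y⟩ := by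
  subst e
  exact Sigma.SigmaHom.mk (ObjectProperty.homMk g)

theorem sigmaFibHomMk_comp {k k' k'' : K} (e : k = k') (e' : k' = k'') (x : Fib W k)
    (y : Fib W k') (z : Fib W k'') (g : x.obj ⟶ y.obj) (g' : y.obj ⟶ z.obj) :
    sigmaFibHomMk W e x y g ≫ sigmaFibHomMk W e' y z g' =
      sigmaFibHomMk W (e.trans e') x z (g ≫ g') := by
  subst e e'
  rfl

def sigmaFibDesc : Cat.of (Σ k, (Fib W k : Type u)) ⟶ B :=
  (Sigma.desc fun _ => ObjectProperty.ι _).toCatHom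

theorem sigmaFibDesc_map_sigmaFibHomMk {k k' : K} (e : k = k') (x : Fib W k) (y : Fib W k')
    (g : x.obj ⟶ y.obj) : (sigmaFibDesc W).toFunctor.map (sigmaFibHomMk W e x y g) = g := by
  subst e
  rfl

def sigmaFibLift : B ⟶ Cat.of (Σ k, (Fib W k : Type u)) := Functor.toCatHom
  { obj b := ⟨(W.toFunctor.obj b).as, ⟨b, rfl⟩⟩
    map g := sigmaFibHomMk W (Discrete.eq_of_hom (W.toFunctor.map g)) ⟨_, rfl⟩ ⟨_, rfl⟩ g
    map_id _ := rfl
    map_comp g g' := (sigmaFibHomMk_comp W _ _ ⟨_, rfl⟩ ⟨_, rfl⟩ ⟨_, rfl⟩ g g').symm }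

instance : (sigmaFibDesc W).toFunctor.Faithful := by
  constructor
  intro (P : Σ k, (Fib W k : Type u)) (Q : Σ k, (Fib W k : Type u)) (q : Sigma.SigmaHom P Q)
    (q' : Sigma.SigmaHom P Q) h
  cases q
  cases q'
  congr 1
  exact (ObjectProperty.ι _).map_injective h

theorem sigmaFibLift_comp_sigmaFibDesc : sigmaFibLift W ≫ sigmaFibDesc W = 𝟙 B := by
  refine Cat.ext (CategoryTheory.Functor.ext (fun b => rfl) fun b b' g => ?_)
  refine (sigmaFibDesc_map_sigmaFibHomMk W _ ⟨b, rfl⟩ ⟨b', rfl⟩ g).trans ?_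
  change g = 𝟙 b ≫ g ≫ 𝟙 b'
  simp

def sigmaFibIso : Cat.of (Σ k, (Fib W k : Type u)) ≅ B where
  hom := sigmaFibDesc W
  inv := sigmaFibLift W
  hom_inv_id := by
    refine Cat.ext (Functor.comp_eq_id_of_faithful _ _
      (congrArg Cat.Hom.toFunctor (sigmaFibLift_comp_sigmaFibDesc W)) ?_)
    rintro ⟨k, b, hb⟩
    obtain rfl : (W.toFunctor.obj b).as = k := congrArg Discrete.as hb
    rfl
  inv_hom_id := sigmaFibLift_comp_sigmaFibDesc W

end SigmaDecomposition

section FiberwiseCriterion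

variable (D : PreDer.{u})

def restrictFibers {B : Cat.{u, u}} (W : B ⟶ Cat.of (Discrete K)) :
    D.Dia B ⥤ ∀ k, D.Dia (Fib W k) :=
  Functor.pi' fun k => D.res (fibIncl W k)

theorem isEquivalence_restrictFibers (hD1 : Der1 D) {B : Cat.{u, u}}
    (W : B ⟶ Cat.of (Discrete K)) : (restrictFibers D W).IsEquivalence := by
  have hfac : restrictFibers D W = D.res (sigmaFibIso W).hom ⋙
      Functor.pi' fun k => D.res (sigmaFibIncl W k) :=
    congrArg Functor.pi' (funext fun k => D.res_comp (sigmaFibIncl W k) (sigmaFibIso W).hom)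
  have := hD1 K (fun _ _ hf => ⟨surjInv hf, rightInverse_surjInv hf⟩) fun k => Fib W k
  rw [hfac]
  infer_instance

theorem exists_res_discMap_iso (hD1 : Der1 D) (t : K → D.Dia (Cat.of (Discrete PUnit))) :
    ∃ X : D.Dia (Cat.of (Discrete K)),
      ∀ k, Nonempty ((D.res (discMap fun _ : PUnit => k)).obj X ≅ t k) := by
  let R := restrictFibers D (𝟙 (Cat.of (Discrete K)))
  have := isEquivalence_restrictFibers D hD1 (𝟙 (Cat.of (Discrete K)))
  refine ⟨R.objPreimage fun k => (D.res (toPt _)).obj (t k), fun k => ⟨?_⟩⟩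
  let σ : Cat.of (Discrete PUnit) ⟶ Fib (𝟙 (Cat.of (Discrete K))) k :=
    (ObjectProperty.lift _ (discMap fun _ : PUnit => k).toFunctor fun _ => rfl).toCatHom
  have hσ : σ ≫ toPt _ = 𝟙 _ := (eq_toPt _).trans (eq_toPt _).symm
  exact eqToIso (res_obj_comp D σ (fibIncl _ k) _).symm ≪≫
    (D.res σ).mapIso (Pi.isoApp (R.objObjPreimageIso _) k) ≪≫
    eqToIso (by rw [res_obj_comp, hσ, D.res_id]; rfl)

variable {A B : Cat.{u, u}} {F : A ⟶ B} {V : B ⟶ Cat.of (Discrete K)}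

theorem res_fibIncl_res (V : B ⟶ Cat.of (Discrete K)) (k : K) (X : D.Dia (Cat.of (Discrete K))) :
    (D.res (fibIncl V k)).obj ((D.res V).obj X) =
      (D.res (toPt _)).obj ((D.res (discMap fun _ : PUnit => k)).obj X) := by
  rw [res_obj_comp, res_obj_comp, fibIncl_comp]

theorem isDEquiv_iff_bijective_piMap (hD1 : Der1 D) :
    IsDEquiv D K F V ↔ ∀ X Y : D.Dia (Cat.of (Discrete K)), Bijective (Pi.map fun k =>
      ((D.res (fiberMap F V k)).map : ((D.res (fibIncl V k)).obj ((D.res V).obj X) ⟶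
        (D.res (fibIncl V k)).obj ((D.res V).obj Y)) → _)) := by
  have := isEquivalence_restrictFibers D hD1 V
  have := isEquivalence_restrictFibers D hD1 (F ≫ V)
  have hsq : restrictFibers D V ⋙ Functor.pi (fun k => D.res (fiberMap F V k)) =
      D.res F ⋙ restrictFibers D (F ≫ V) := by
    change Functor.pi' (fun k => D.res (fibIncl V k) ⋙ D.res (fiberMap F V k)) =
      Functor.pi' fun k => D.res F ⋙ D.res (fibIncl (F ≫ V) k)
    simp_rw [← D.res_comp]
    rfl
  exact forall₂_congr fun X Y => Functor.map_bijective_iff_of_comp_eq _ _ _ _ hsq _ _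

theorem isDEquiv_of_forall_fiber (hD1 : Der1 D)
    (h : ∀ k, IsDEquiv D PUnit (fiberMap F V k) (toPt _)) : IsDEquiv D K F V :=
  (isDEquiv_iff_bijective_piMap D hD1).2 fun X Y => Bijective.piMap fun k =>
    Functor.map_bijective_of_iso _ (eqToIso (res_fibIncl_res D V k X).symm)
      (eqToIso (res_fibIncl_res D V k Y).symm) (h k _ _)

/-- Testing the fiber over `k` on `x, y` uses diagrams on `K` that are `x, y` over `k` and `x, x`
elsewhere, so that the other fibers, having morphisms, do not obstruct bijectivity. -/
theorem IsDEquiv.fiber (hD1 : Der1 D) (h : IsDEquiv D K F V) (k : K) :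
    IsDEquiv D PUnit (fiberMap F V k) (toPt _) := by
  classical
  intro x y
  have fiberIso : ∀ k' Z s, ((D.res (discMap fun _ : PUnit => k')).obj Z ≅ s) →
      ((D.res (fibIncl V k')).obj ((D.res V).obj Z) ≅ (D.res (toPt _)).obj s) :=
    fun k' Z _ e => eqToIso (res_fibIncl_res D V k' Z) ≪≫ (D.res _).mapIso e
  obtain ⟨X, eX⟩ := exists_res_discMap_iso D hD1 fun _ => x
  obtain ⟨Y, eY⟩ := exists_res_discMap_iso D hD1 (update (fun _ => x) k y)
  have hk := ((isDEquiv_iff_bijective_piMap D hD1).1 h X Y).of_piMap k fun k' hk' =>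
    ⟨(fiberIso k' X _ (eX k').some).hom ≫
      (fiberIso k' Y _ ((eY k').some ≪≫ eqToIso (update_of_ne hk' _ _))).inv⟩
  exact Functor.map_bijective_of_iso _ (fiberIso k X _ (eX k).some)
    (fiberIso k Y _ ((eY k).some ≪≫ eqToIso (update_self _ _ _))) hk

theorem IsDEquiv.of_iso {A' B' : Cat.{u, u}} {F' : A' ⟶ B'} (eA : A' ≅ A) (eB : B' ≅ B)
    (hF : F' ≫ eB.hom = eA.hom ≫ F) (h : IsDEquiv D K F V) : IsDEquiv D K F' (eB.hom ≫ V) := by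
  intro X Y
  have hsq : D.res eB.hom ⋙ D.res F' = D.res F ⋙ D.res eA.hom := by
    rw [← D.res_comp, ← D.res_comp, hF]
  refine Functor.map_bijective_of_iso _ (eqToIso (res_obj_comp D _ _ X))
    (eqToIso (res_obj_comp D _ _ Y)) ?_
  exact (Functor.map_bijective_iff_of_comp_eq _ _ _ _ hsq _ _).1 (h X Y)

end FiberwiseCriterion

section Pullback

variable {I J : Type u} (f : I → J) {B : Cat.{u, u}} (V : B ⟶ Cat.of (Discrete J))

abbrev pbFst : Cat.of (CatPB (discMap f).toFunctor V.toFunctor) ⟶ Cat.of (Discrete I) :=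
  (CatPB.fst _ _).toCatHom

def pullbackFibHom (i : I) : Fib (pbFst f V) i ⟶ Fib V (f i) := Functor.toCatHom
  { obj x := ⟨x.obj.b, by rw [← x.obj.h, show x.obj.c = ⟨i⟩ from x.property]; rfl⟩
    map g := ObjectProperty.homMk g.hom.1.2 }

def pullbackFibInv (i : I) : Fib V (f i) ⟶ Fib (pbFst f V) i := Functor.toCatHom
  { obj b := ⟨⟨⟨i⟩, b.obj, b.property.symm⟩, rfl⟩
    map g := ObjectProperty.homMk
      ⟨(𝟙 _, g.hom), (Discrete.instSubsingletonDiscreteHom _ _).elim _ _⟩ }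

instance (i : I) : (pullbackFibHom f V i).toFunctor.Faithful where
  map_injective h := ObjectProperty.hom_ext _ <| Subtype.ext <|
    Prod.ext ((Discrete.instSubsingletonDiscreteHom _ _).elim _ _) (congrArg (·.hom) h)

def pullbackFibIso (i : I) : Fib (pbFst f V) i ≅ Fib V (f i) where
  hom := pullbackFibHom f V i
  inv := pullbackFibInv f V i
  hom_inv_id := Cat.ext <| Functor.comp_eq_id_of_faithful _ _ rfl <| by
    rintro ⟨⟨c, b, h⟩, hc⟩
    obtain rfl : c = ⟨i⟩ := hc
    rfl
  inv_hom_id := rfl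

end Pullback

end Derivator

open Derivator in
/-- If `f : I → J` is a function between sets and `u : A ⟶ B` is a
`D`-equivalence over `J` for a left derivator `D`, then the pullback
`f^*(u) : f^*A ⟶ f^*B` is a `D`-equivalence over `I`. -/
theorem pullback_dEquiv
    (D : PreDer.{u}) (L : LanData D) (hD : IsLeftDerivator D L)
    {I J : Type u} (f : I → J) {A B : Cat.{u, u}} (F : A ⟶ B)
    (V : B ⟶ Cat.of (Discrete J)) (h : IsDEquiv D J F V) :
    IsDEquiv D I
      (A := Cat.of (CatPB (((discMap f).toFunctor : Discrete I ⥤ Discrete J)) (((F ≫ V).toFunctor : ↑A ⥤ Discrete J))))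
      (B := Cat.of (CatPB (((discMap f).toFunctor : Discrete I ⥤ Discrete J)) ((V.toFunctor : ↑B ⥤ Discrete J))))
      (pbFunctor f F V).toCatHom
      (CatPB.fst (((discMap f).toFunctor : Discrete I ⥤ Discrete J)) ((V.toFunctor : ↑B ⥤ Discrete J))).toCatHom := by
  refine isDEquiv_of_forall_fiber D hD.1 fun i => ?_
  rw [← eq_toPt ((pullbackFibIso f V i).hom ≫ toPt _)]
  exact (h.fiber D hD.1 (f i)).of_iso D (pullbackFibIso f (F ≫ V) i) _ rfl
end

section
/- For a cocomplete category C regarded as a prederivator via C(A) = C^A, a functor u : A → B over a discrete set I is a C-equivalence over I whenever for each i ∈ I the induced map π0(A_i) → π0(B_i) on connected components of the fibers is a bijection. Conversely, when C = Set, every Set-equivalence over I induces bijections π0(A_i) ≅ π0(B_i) for all i ∈ I. -/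
/-!
A natural transformation `V ⋙ X ⟶ V ⋙ Y` is the same as a family, indexed by `i : I`, of maps
`π₀(B_i) → (X_i ⟶ Y_i)`: since `V` lands in a discrete category, each component can be
transported to `X_i ⟶ Y_i`, and naturality says exactly that it is constant along morphisms of
the fiber `B_i`. Under this identification, whiskering with `u` becomes precomposition with
`π₀(A_i) → π₀(B_i)`, and precomposition with bijections is bijective.
For `C = Type`, taking `X` to be the point shows that precomposition with `π₀(A_i) → π₀(B_i)`
is bijective on maps into every type. Such a map has a retraction, so it is injective; and the
indicator of its image agrees with the constant `True` after precomposition, so it is surjective.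
-/

open CategoryTheory Limits

universe v₂ u₂ u

namespace DerivatorEquiv

/-- The map induced on connected components by a functor. -/
def π0Map {J : Type*} {K : Type*} [Category J] [Category K] (F : J ⥤ K) :
    ConnectedComponents J → ConnectedComponents K :=
  Quotient.lift (fun j => Quotient.mk _ (F.obj j))
    (fun _ _ h => Quotient.sound (zigzag_obj_of_zigzag F h))

/-- The fiber of a category over a discrete set. -/
def Fiber {B : Type u} [Category.{u} B] {I : Type u} (V : B ⥤ Discrete I) (i : I) :=
  ObjectProperty.FullSubcategory (fun b => V.obj b = ⟨i⟩)

instance {B : Type u} [Category.{u} B] {I : Type u} (V : B ⥤ Discrete I) (i : I) :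
    Category (Fiber V i) :=
  ObjectProperty.FullSubcategory.category _

/-- The functor induced on fibers by a functor over a discrete set. -/
def fiberMap {A B : Type u} [Category.{u} A] [Category.{u} B] {I : Type u}
    (F : A ⥤ B) (V : B ⥤ Discrete I) (i : I) : Fiber (F ⋙ V) i ⥤ Fiber V i :=
  ObjectProperty.lift _ (ObjectProperty.ι _ ⋙ F) (fun a => a.2)

/-- `u : A ⥤ B` over the discrete set `I` is a `C`-equivalence over `I`, for the
prederivator represented by a category `C` (with `C(A) = C^A`): restriction along `u`
is fully faithful on the image of restriction along `v`. -/
def IsCEquiv {A B : Type u} [Category.{u} A] [Category.{u} B] {I : Type u}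
    (F : A ⥤ B) (V : B ⥤ Discrete I) (C : Type u₂) [Category.{v₂} C] : Prop :=
  ∀ X Y : Discrete I ⥤ C,
    Function.Bijective (fun g : V ⋙ X ⟶ V ⋙ Y => Functor.whiskerLeft F g)

end DerivatorEquiv

open Function

section PiPrecomp

variable {ι : Type*}

def piPrecomp {S T : ι → Type*} (f : ∀ i, S i → T i) (Z : ι → Sort*) (ψ : ∀ i, T i → Z i)
    (i : ι) : S i → Z i :=
  ψ i ∘ f i

lemma bijective_piPrecomp {S T : ι → Type*} {f : ∀ i, S i → T i} {Z : ι → Sort*}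
    (hf : ∀ i, Bijective (f i)) : Bijective (piPrecomp f Z) := by
  have : piPrecomp f Z = Equiv.piCongrRight fun i =>
      (Equiv.ofBijective _ (hf i)).symm.arrowCongr (Equiv.refl (Z i)) := rfl
  exact this ▸ Equiv.bijective _

lemma bijective_piPrecomp_congr {S T : ι → Type*} (f : ∀ i, S i → T i) {W Z : ι → Sort*}
    (e : ∀ i, W i ≃ Z i) (h : Bijective (piPrecomp f W)) : Bijective (piPrecomp f Z) := by
  let postcompS : (∀ i, S i → W i) ≃ ∀ i, S i → Z i :=
    Equiv.piCongrRight fun i => (Equiv.refl (S i)).arrowCongr (e i)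
  let postcompT : (∀ i, T i → W i) ≃ ∀ i, T i → Z i :=
    Equiv.piCongrRight fun i => (Equiv.refl (T i)).arrowCongr (e i)
  have : piPrecomp f Z = postcompS ∘ piPrecomp f W ∘ postcompT.symm := by
    funext ψ i s
    simp [postcompS, postcompT, piPrecomp, Equiv.arrowCongr]
  exact this ▸ (postcompS.bijective.comp h).comp postcompT.symm.bijective

lemma bijective_of_forall_bijective_piPrecomp {S T : ι → Type u} (f : ∀ i, S i → T i)
    (h : ∀ Z : ι → Type u, Bijective (piPrecomp f Z)) (i : ι) : Bijective (f i) := by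
  constructor
  · obtain ⟨r, hr⟩ := (h S).2 fun _ => id
    exact LeftInverse.injective fun s => congrFun (congrFun hr i) s
  · have hrange : (fun j t => ULift.up (t ∈ Set.range (f j))) = fun _ _ => ULift.up True :=
      (h fun _ => ULift Prop).1 <| funext fun j => funext fun s => by simp [piPrecomp]
    intro t
    simpa using congrArg ULift.down (congrFun (congrFun hrange i) t)

end PiPrecomp

lemma CategoryTheory.Zigzag.eq_of_preserves_morphisms {J : Type*} [Category J] {α : Sort*}
    (F : J → α) (h : ∀ {j j' : J}, (j ⟶ j') → F j = F j') {j j' : J} (hz : Zigzag j j') :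
    F j = F j' := by
  induction hz with
  | refl => rfl
  | tail _ z ih => exact ih.trans (z.elim (fun ⟨f⟩ => h f) fun ⟨f⟩ => (h f).symm)

namespace DerivatorEquiv

section Fiberwise

variable {B : Type u} [Category.{u} B] {I : Type u} (W : B ⥤ Discrete I)
  {C : Type u₂} [Category.{v₂} C] {X Y : Discrete I ⥤ C}

def fiberApp (g : W ⋙ X ⟶ W ⋙ Y) (i : I) (b : Fiber W i) : X.obj ⟨i⟩ ⟶ Y.obj ⟨i⟩ :=
  eqToHom (congrArg X.obj b.2.symm) ≫ g.app b.1 ≫ eqToHom (congrArg Y.obj b.2)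

lemma fiberApp_eq_of_hom (g : W ⋙ X ⟶ W ⋙ Y) (i : I) {b b' : Fiber W i} (f : b ⟶ b') :
    fiberApp W g i b = fiberApp W g i b' := by
  have hW : W.map f.hom = eqToHom (b.2.trans b'.2.symm) := Subsingleton.elim _ _
  have hnat := g.naturality f.hom
  simp only [Functor.comp_map, hW, eqToHom_map] at hnat
  rw [eqToHom_comp_iff] at hnat
  simp [fiberApp, hnat]

lemma natTrans_ext_of_fiberApp {g g' : W ⋙ X ⟶ W ⋙ Y}
    (h : ∀ i b, fiberApp W g i b = fiberApp W g' i b) : g = g' := by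
  ext b
  simpa [fiberApp] using h (W.obj b).as ⟨b, rfl⟩

lemma eq_eqToHom_comp_apply_mk
    (ψ : ∀ i, ConnectedComponents (Fiber W i) → (X.obj ⟨i⟩ ⟶ Y.obj ⟨i⟩))
    (b : B) {i : I} (hb : W.obj b = ⟨i⟩) :
    ψ (W.obj b).as (Quotient.mk _ ⟨b, rfl⟩) =
      eqToHom (congrArg X.obj hb) ≫ ψ i (Quotient.mk _ ⟨b, hb⟩) ≫
        eqToHom (congrArg Y.obj hb.symm) := by
  obtain rfl : (W.obj b).as = i := congrArg Discrete.as hb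
  simp

def natTransOfπ0 (ψ : ∀ i, ConnectedComponents (Fiber W i) → (X.obj ⟨i⟩ ⟶ Y.obj ⟨i⟩)) :
    W ⋙ X ⟶ W ⋙ Y where
  app b := ψ (W.obj b).as (Quotient.mk _ ⟨b, rfl⟩)
  naturality b b' f := by
    have e : W.obj b = W.obj b' := Discrete.ext (Discrete.eq_of_hom (W.map f))
    have hW : W.map f = eqToHom e := Subsingleton.elim _ _
    have hcomp : (Quotient.mk _ ⟨b, rfl⟩ : ConnectedComponents (Fiber W (W.obj b).as)) =
        Quotient.mk _ ⟨b', e.symm⟩ :=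
      Quotient.sound (Zigzag.of_hom (ObjectProperty.homMk f))
    change X.map (W.map f) ≫ _ = _ ≫ Y.map (W.map f)
    rw [hW, eqToHom_map, eqToHom_map]
    simp [hcomp, eq_eqToHom_comp_apply_mk W ψ b' e.symm]

lemma fiberApp_natTransOfπ0
    (ψ : ∀ i, ConnectedComponents (Fiber W i) → (X.obj ⟨i⟩ ⟶ Y.obj ⟨i⟩)) (i : I)
    (b : Fiber W i) : fiberApp W (natTransOfπ0 W ψ) i b = ψ i (Quotient.mk _ b) := by
  obtain ⟨b, hb⟩ := b
  simp [fiberApp, natTransOfπ0, eq_eqToHom_comp_apply_mk W ψ b hb]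

def natTransEquiv :
    (W ⋙ X ⟶ W ⋙ Y) ≃ ∀ i, ConnectedComponents (Fiber W i) → (X.obj ⟨i⟩ ⟶ Y.obj ⟨i⟩) where
  toFun g i := Quotient.lift (fiberApp W g i) fun _ _ =>
    Zigzag.eq_of_preserves_morphisms _ (fiberApp_eq_of_hom W g i)
  invFun := natTransOfπ0 W
  left_inv _ := natTrans_ext_of_fiberApp W fun i b => fiberApp_natTransOfπ0 W _ i b
  right_inv ψ := funext fun i => funext <| Quotient.ind fun b => fiberApp_natTransOfπ0 W ψ i b

end Fiberwise

section Whiskering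

variable {A B I : Type u} [Category.{u} A] [Category.{u} B] (F : A ⥤ B) (V : B ⥤ Discrete I)

lemma natTransEquiv_whiskerLeft {C : Type u₂} [Category.{v₂} C] {X Y : Discrete I ⥤ C}
    (g : V ⋙ X ⟶ V ⋙ Y) :
    natTransEquiv (F ⋙ V) (Functor.whiskerLeft F g) =
      piPrecomp (fun i => π0Map (fiberMap F V i)) _ (natTransEquiv V g) :=
  funext fun _ => funext <| Quotient.ind fun _ => rfl

lemma isCEquiv_iff_bijective_piPrecomp (C : Type u₂) [Category.{v₂} C] :
    IsCEquiv F V C ↔ ∀ X Y : Discrete I ⥤ C, Bijective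
      (piPrecomp (fun i => π0Map (fiberMap F V i)) fun i => X.obj ⟨i⟩ ⟶ Y.obj ⟨i⟩) := by
  refine forall₂_congr fun X Y => ?_
  have : (fun g : V ⋙ X ⟶ V ⋙ Y => Functor.whiskerLeft F g) =
      (natTransEquiv (F ⋙ V)).symm ∘ piPrecomp (fun i => π0Map (fiberMap F V i)) _ ∘
        natTransEquiv V := by
    funext g
    simp [← natTransEquiv_whiskerLeft]
  rw [this, Equiv.comp_bijective, Equiv.bijective_comp]

lemma isCEquiv_of_bijective_π0Map (C : Type u₂) [Category.{v₂} C]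
    (h : ∀ i, Bijective (π0Map (fiberMap F V i))) : IsCEquiv F V C :=
  (isCEquiv_iff_bijective_piPrecomp F V C).2 fun _ _ => bijective_piPrecomp h

lemma bijective_π0Map_of_isCEquiv_type (h : IsCEquiv F V (Type u)) (i : I) :
    Bijective (π0Map (fiberMap F V i)) := by
  refine bijective_of_forall_bijective_piPrecomp (fun j => π0Map (fiberMap F V j))
    (fun Z => ?_) i
  exact bijective_piPrecomp_congr _
    (fun j => TypeCat.homEquiv.trans (Equiv.punitArrowEquiv (Z j)))
    ((isCEquiv_iff_bijective_piPrecomp F V _).1 h (Discrete.functor fun _ => PUnit)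
      (Discrete.functor Z))

end Whiskering

end DerivatorEquiv

open DerivatorEquiv in
/-- For a cocomplete category `C` regarded as a prederivator via
`C(A) = C^A`, a functor `u : A ⥤ B` over a discrete set `I` is a `C`-equivalence over
`I` whenever for each `i ∈ I` the induced map `π₀(A_i) → π₀(B_i)` on connected
components of the fibers is a bijection.  Conversely, when `C = Set`, every
`Set`-equivalence over `I` induces bijections `π₀(A_i) ≅ π₀(B_i)` for all `i ∈ I`. -/
theorem isCEquiv_of_pi0_bijective_and_converse_for_Set :
    (∀ (C : Type u₂) [Category.{v₂} C] [HasColimitsOfSize.{u, u} C]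
      (A B I : Type u) [Category.{u} A] [Category.{u} B]
      (F : A ⥤ B) (V : B ⥤ Discrete I),
      (∀ i : I, Function.Bijective (π0Map (fiberMap F V i))) → IsCEquiv F V C) ∧
    (∀ (A B I : Type u) [Category.{u} A] [Category.{u} B]
      (F : A ⥤ B) (V : B ⥤ Discrete I),
      IsCEquiv F V (Type u) → ∀ i : I, Function.Bijective (π0Map (fiberMap F V i))) :=
  ⟨fun C _ _ _ _ _ _ _ F V h => isCEquiv_of_bijective_π0Map F V C h,
    fun _ _ _ _ _ F V h => bijective_π0Map_of_isCEquiv_type F V h⟩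
end

section
/- The preorder reflection construction E ↦ E_pos(A) defines a derivator when E has small products and coproducts: each E_pos(A) is a (large) preorder, restriction functors have both adjoints given by fiberwise products and coproducts, and axioms Der1–Der4 hold. Moreover, for E = Set, a functor u : A → B over a discrete I is a Set_pos-equivalence over I if and only if there exists a function ob(B) → ob(A) over I. -/
open CategoryTheory

universe u

namespace Derivator

/-- The data of right Kan extensions (Der3R) for a prederivator. -/
structure RanData (D : PreDer.{u}) : Type (u + 1) where
  ran : ∀ {A B : Cat.{u, u}}, (A ⟶ B) → (D.Dia A ⥤ D.Dia B)
  radj : ∀ {A B : Cat.{u, u}} (F : A ⟶ B), D.res F ⊣ ran F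

section RightMate

variable (D : PreDer.{u}) (R : RanData D)

/-- The component at `X` of the canonical mate `u^* v_* → p_* q^*` associated to a
square with a 2-cell `μ : u ∘ p ⟶ v ∘ q`. -/
def rmateApp {P A B C : Cat.{u, u}} (p : P ⟶ A) (q : P ⟶ B) (F : A ⟶ C) (G : B ⟶ C)
    (μ : p ≫ F ⟶ q ≫ G) (X : D.Dia B) :
    (D.res F).obj ((R.ran G).obj X) ⟶ (R.ran p).obj ((D.res q).obj X) :=
  (R.radj p).homEquiv _ _
    (eqToHom (Functor.congr_obj (D.res_comp p F).symm ((R.ran G).obj X)) ≫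
      (D.transf μ).app ((R.ran G).obj X) ≫
      eqToHom (Functor.congr_obj (D.res_comp q G) ((R.ran G).obj X)) ≫
      (D.res q).map ((R.radj G).counit.app X))

/-- Axiom (Der4R): comma squares whose upper-right corner is discrete are `D`-exact. -/
def Der4R : Prop :=
  ∀ (I : Type u) {B C : Cat.{u, u}} (U : Cat.of (Discrete I) ⟶ C) (V : B ⟶ C)
    (X : D.Dia B),
    IsIso (rmateApp D R
      (P := Cat.of (Comma (U.toFunctor : Discrete I ⥤ C) (V.toFunctor : ↑B ⥤ ↑C)))
      (Comma.fst (U.toFunctor : Discrete I ⥤ C) (V.toFunctor : ↑B ⥤ ↑C)).toCatHom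
      (Comma.snd (U.toFunctor : Discrete I ⥤ C) (V.toFunctor : ↑B ⥤ ↑C)).toCatHom
      U V (Comma.natTrans (U.toFunctor : Discrete I ⥤ C) (V.toFunctor : ↑B ⥤ ↑C)).toCatHom₂ X)

end RightMate

/-- An `A`-shaped diagram in the preorder reflection `E_pos(A)`: a family of objects
together with a family of morphisms indexed by the morphisms of `A`, with no
functoriality conditions. -/
structure PosDiag (E : Type (u + 1)) [Category.{u} E] (A : Type u) [Category.{u} A] :
    Type (u + 1) where
  obj : A → E
  map : ∀ {a a' : A}, (a ⟶ a') → (obj a ⟶ obj a')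

/-- Morphisms in the preorder `E_pos(A)`: there is a morphism `X ⟶ Y` iff there exists
a family of morphisms `X_a ⟶ Y_a`, and any two such morphisms are equal. -/
def PosHom {E : Type (u + 1)} [Category.{u} E] {A : Type u} [Category.{u} A]
    (X Y : PosDiag E A) : Type u :=
  ULift.{u} (PLift (Nonempty (∀ a : A, X.obj a ⟶ Y.obj a)))

instance {E : Type (u + 1)} [Category.{u} E] {A : Type u} [Category.{u} A]
    (X Y : PosDiag E A) : Subsingleton (PosHom X Y) :=
  ⟨by rintro ⟨⟨a⟩⟩ ⟨⟨b⟩⟩; rfl⟩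

instance posDiagCategory (E : Type (u + 1)) [Category.{u} E] (A : Type u)
    [Category.{u} A] : Category.{u} (PosDiag E A) where
  Hom X Y := PosHom X Y
  id X := ⟨⟨⟨fun a => 𝟙 (X.obj a)⟩⟩⟩
  comp {X Y Z} f g := ⟨⟨f.down.down.elim fun f' => g.down.down.elim fun g' =>
    ⟨fun a => f' a ≫ g' a⟩⟩⟩
  id_comp _ := Subsingleton.elim (α := PosHom _ _) _ _
  comp_id _ := Subsingleton.elim (α := PosHom _ _) _ _
  assoc _ _ _ := Subsingleton.elim (α := PosHom _ _) _ _

/-- The prederivator `E_pos` of "incoherent" diagrams in `E`, whose value at `A` is the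
(large) preorder `E_pos(A)`. -/
def posPre (E : Type (u + 1)) [Category.{u} E] : PreDer.{u} where
  Dia A := PosDiag E ↑A
  str _ := inferInstance
  res {A B} F :=
    { obj := fun X => { obj := fun a => X.obj (F.toFunctor.obj a), map := fun {a a'} α => X.map (F.toFunctor.map α) }
      map := fun {X Y} g => ⟨⟨g.down.down.elim fun g' => ⟨fun a => g' (F.toFunctor.obj a)⟩⟩⟩
      map_id := fun _ => Subsingleton.elim (α := PosHom _ _) _ _
      map_comp := fun _ _ => Subsingleton.elim (α := PosHom _ _) _ _ }
  res_id A := CategoryTheory.Functor.ext (fun X => rfl)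
    (fun X Y f => Subsingleton.elim (α := PosHom _ _) _ _)
  res_comp F G := CategoryTheory.Functor.ext (fun X => rfl)
    (fun X Y f => Subsingleton.elim (α := PosHom _ _) _ _)
  transf {A B F G} μ :=
    { app := fun X => ⟨⟨⟨fun a => X.map (μ.toNatTrans.app a)⟩⟩⟩
      naturality := fun _ _ _ => Subsingleton.elim (α := PosHom _ _) _ _ }
  transf_id F := by
    apply NatTrans.ext; funext X; exact Subsingleton.elim (α := PosHom _ _) _ _
  transf_comp α β := by
    apply NatTrans.ext; funext X; exact Subsingleton.elim (α := PosHom _ _) _ _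

end Derivator

/-!
Morphisms of `E_pos(A)` only record that a family of components exists, so `E_pos(A)` is a thin
category: functors out of it are faithful, all coherence conditions (naturality, triangle
identities) hold automatically, and a morphism is invertible as soon as there is a morphism
back. Hence the pointwise formulas `(u_! X)_b = ∐_{u a ⟶ b} X_a` and
`(u_* X)_b = ∏_{b ⟶ u a} X_a` give both adjoints of restriction, and the Der4 mates are
invertible because every summand `(a, φ : u a ⟶ v i)` of `(v^* u_! X)_i` reappears as the summand
`((a, i, φ), 𝟙 i)` of the comma-square side (dually for products).

For `E = Set`, after restriction along `F ≫ V` there is the tautological morphism `a ↦ a` from the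
terminal diagram to the fibre diagram `i ↦ {a // (F ≫ V) a = i}` over `I`; its preimage under
`F^*` picks a point of the fibre over `V b` for each `b`, i.e. a section over `I`. Conversely a
section transports components along itself.
-/

namespace Derivator

open Limits

variable {E : Type (u + 1)} [Category.{u} E]

namespace PosDiag

variable {A : Type u} [Category.{u} A]

instance : Quiver.IsThin (PosDiag E A) := fun X Y => inferInstanceAs (Subsingleton (PosHom X Y))

def homMk {X Y : PosDiag E A} (f : ∀ a, X.obj a ⟶ Y.obj a) : X ⟶ Y := ⟨⟨⟨f⟩⟩⟩

noncomputable def components {X Y : PosDiag E A} (f : X ⟶ Y) : ∀ a, X.obj a ⟶ Y.obj a :=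
  f.down.down.some

def sigma {I : Type u} {Aι : I → Type u} [∀ i, Category.{u} (Aι i)]
    (X : ∀ i, PosDiag E (Aι i)) : PosDiag E (Σ i, Aι i) where
  obj p := (X p.1).obj p.2
  map
    | .mk f => (X _).map f

section Kan

variable {B : Type u} [Category.{u} B] (F : A ⥤ B)

noncomputable def lan [HasCoproducts.{u} E] : PosDiag E A ⥤ PosDiag E B where
  obj X :=
    { obj b := ∐ fun p : Σ a, (F.obj a ⟶ b) => X.obj p.1
      map {_ b'} β := Sigma.desc fun p =>
        Sigma.ι (fun p : Σ a, (F.obj a ⟶ b') => X.obj p.1) ⟨p.1, p.2 ≫ β⟩ }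
  map {_ Y} f := homMk fun b => Sigma.desc fun p =>
    components f p.1 ≫ Sigma.ι (fun p : Σ a, (F.obj a ⟶ b) => Y.obj p.1) p
  map_id _ := Subsingleton.elim _ _
  map_comp _ _ := Subsingleton.elim _ _

noncomputable def ran [HasProducts.{u} E] : PosDiag E A ⥤ PosDiag E B where
  obj X :=
    { obj b := ∏ᶜ fun p : Σ a, (b ⟶ F.obj a) => X.obj p.1
      map {b _} β := Pi.lift fun p =>
        Pi.π (fun p : Σ a, (b ⟶ F.obj a) => X.obj p.1) ⟨p.1, β ≫ p.2⟩ }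
  map {X _} f := homMk fun b => Pi.lift fun p =>
    Pi.π (fun p : Σ a, (b ⟶ F.obj a) => X.obj p.1) p ≫ components f p.1
  map_id _ := Subsingleton.elim _ _
  map_comp _ _ := Subsingleton.elim _ _

end Kan

end PosDiag

instance (A : Cat.{u, u}) : Quiver.IsThin ((posPre E).Dia A) :=
  inferInstanceAs (Quiver.IsThin (PosDiag E A))

open PosDiag

noncomputable def posLanData [HasCoproducts.{u} E] : LanData (posPre E) where
  lan F := lan F.toFunctor
  adj F :=
    { unit :=
        { app X := homMk fun a =>
            Sigma.ι (fun p : Σ a', (F.toFunctor.obj a' ⟶ F.toFunctor.obj a) => X.obj p.1)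
              ⟨a, 𝟙 _⟩
          naturality _ _ _ := Subsingleton.elim _ _ }
      counit :=
        { app Y := homMk fun _ => Sigma.desc fun p => Y.map p.2
          naturality _ _ _ := Subsingleton.elim _ _ }
      left_triangle_components _ := Subsingleton.elim _ _
      right_triangle_components _ := Subsingleton.elim _ _ }

noncomputable def posRanData [HasProducts.{u} E] : RanData (posPre E) where
  ran F := ran F.toFunctor
  radj F :=
    { unit :=
        { app Y := homMk fun _ => Pi.lift fun p => Y.map p.2
          naturality _ _ _ := Subsingleton.elim _ _ }
      counit :=
        { app X := homMk fun a =>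
            Pi.π (fun p : Σ a', (F.toFunctor.obj a ⟶ F.toFunctor.obj a') => X.obj p.1)
              ⟨a, 𝟙 _⟩
          naturality _ _ _ := Subsingleton.elim _ _ }
      left_triangle_components _ := Subsingleton.elim _ _
      right_triangle_components _ := Subsingleton.elim _ _ }

theorem der1_posPre : Der1 (posPre E) := fun I _ Aι =>
  { full := ⟨fun {X Y} g =>
      ⟨homMk fun p => components (g p.1) p.2, funext fun _ => Subsingleton.elim _ _⟩⟩
    essSurj := ⟨fun X =>
      ⟨sigma X, ⟨Pi.isoMk fun _ =>
        iso_of_both_ways (homMk fun _ => 𝟙 _) (homMk fun _ => 𝟙 _)⟩⟩⟩ }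

theorem der2_posPre : Der2 (posPre E) := fun A => ⟨fun {_ _} f _ => by
  let g := inv (((posPre E).res (objIncl A)).map f)
  exact (iso_of_both_ways f (homMk fun a => components g ⟨a⟩)).isIso_hom⟩

theorem der4L_posPre [HasCoproducts.{u} E] : Der4L (posPre E) posLanData := fun F _ G X =>
  (iso_of_both_ways _ (homMk fun i =>
    Limits.Sigma.desc fun p : Σ a, (F.toFunctor.obj a ⟶ G.toFunctor.obj i) =>
    Sigma.ι (fun q : Σ e : Comma F.toFunctor G.toFunctor, (e.right ⟶ i) => X.obj q.1.left)
      ⟨⟨p.1, i, p.2⟩, 𝟙 i⟩)).isIso_hom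

theorem der4R_posPre [HasProducts.{u} E] : Der4R (posPre E) posRanData := fun _ {_ _} U V X =>
  (iso_of_both_ways _ (homMk fun i =>
    Pi.lift fun p : Σ b, (U.toFunctor.obj i ⟶ V.toFunctor.obj b) =>
    Pi.π (fun q : Σ e : Comma U.toFunctor V.toFunctor, (i ⟶ e.left) => X.obj q.1.right)
      ⟨⟨i, p.1, p.2⟩, 𝟙 i⟩)).isIso_hom

variable {A B : Cat.{u, u}} {I : Type u} (F : A ⟶ B) (V : B ⟶ Cat.of (Discrete I))

theorem isDEquiv_posPre_of_section (s : B → A)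
    (hs : ∀ b, (F ≫ V).toFunctor.obj (s b) = V.toFunctor.obj b) :
    IsDEquiv (posPre E) I F V := fun X Y =>
  ⟨((posPre E).res F).map_injective, fun g =>
    ⟨homMk fun b => eqToHom (congrArg X.obj (hs b)).symm ≫ components g (s b) ≫
      eqToHom (congrArg Y.obj (hs b)), Subsingleton.elim _ _⟩⟩

theorem exists_section_of_isDEquiv_posPre_type (h : IsDEquiv (posPre (Type u)) I F V) :
    ∃ s : B → A, ∀ b, (F ≫ V).toFunctor.obj (s b) = V.toFunctor.obj b := by
  let point : PosDiag (Type u) (Discrete I) := ⟨fun _ => PUnit, fun _ => 𝟙 _⟩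
  let fibre : PosDiag (Type u) (Discrete I) :=
    ⟨fun i => {a : A // (F ≫ V).toFunctor.obj a = i},
      fun f => TypeCat.ofHom fun a => ⟨a.1, a.2.trans (Discrete.ext (Discrete.eq_of_hom f))⟩⟩
  obtain ⟨g, -⟩ := (h point fibre).2 (homMk fun a => TypeCat.ofHom fun _ => ⟨a, rfl⟩)
  exact ⟨fun b => (components g b PUnit.unit).1, fun b => (components g b PUnit.unit).2⟩

end Derivator

open Derivator in
/-- The preorder reflection construction `E ↦ E_pos(A)` defines a
derivator when `E` has small products and coproducts: each `E_pos(A)` is a (large)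
preorder, the restriction functors have both adjoints (Der3L and Der3R), and axioms
Der1, Der2, Der4L, Der4R hold.  Moreover, for `E = Set`, a functor `u : A ⟶ B` over a
discrete `I` is a `Set_pos`-equivalence over `I` if and only if there exists a function
`ob B → ob A` over `I`. -/
theorem posPre_isDerivator_and_posEquiv_characterization
    (E : Type (u + 1)) [Category.{u} E]
    (hProd : ∀ ι : Type u, Limits.HasLimitsOfShape (Discrete ι) E)
    (hCoprod : ∀ ι : Type u, Limits.HasColimitsOfShape (Discrete ι) E) :
    (∃ (Lp : LanData (posPre E)) (Rp : RanData (posPre E)),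
      IsLeftDerivator (posPre E) Lp ∧ Der4R (posPre E) Rp) ∧
    (∀ {A B : Cat.{u, u}} (I : Type u) (F : A ⟶ B) (V : B ⟶ Cat.of (Discrete I)),
      IsDEquiv (posPre (Type u)) I F V ↔
        ∃ s : ↑B → ↑A, ∀ b : ↑B, (F ≫ V).toFunctor.obj (s b) = V.toFunctor.obj b) :=
  ⟨⟨posLanData, posRanData, ⟨der1_posPre, der2_posPre, der4L_posPre⟩, der4R_posPre⟩,
    fun _ F V => ⟨exists_section_of_isDEquiv_posPre_type F V,
      fun ⟨s, hs⟩ => isDEquiv_posPre_of_section F V s hs⟩⟩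
end
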